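/- arXiv:2309.15190 — 10 statements merged into one kernel-verified Lean document; each statement's English description precedes it below -/
import Mathlib

section
/- Let f : ℝ → ℂ, let a be a real number with a > 1, and let c be a real number with c > 0. Let F denote the Mellin transform of f, F(s) = ∫₀^∞ x^{s−1} f(x) dx. Assume that (i) the function t ↦ F(c + i t) is integrable on ℝ, and (ii) for every natural number n the Mellin inversion formula holds at aⁿ, i.e. f(aⁿ) = (1/(2π)) ∫_ℝ a^{−n(c+it)} F(c + i t) dt. Then the series ∑_{n=0}^∞ f(aⁿ) converges and ∑_{n=0}^∞ f(aⁿ) = (1/(2π)) ∫_ℝ F(c + i t)/(1 − a^{−(c+it)}) dt. -/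
/-!
On the line Re s = c the kernels a^{-ns} are the powers q(t)^n of q(t) = a^{-(c+it)}, and
|q(t)| = a^{-c} < 1 uniformly in t. Hence ∑ₙ ∫ |q^n F| ≤ ∑ₙ a^{-nc} ∫ |F| < ∞, so summation and
integration may be exchanged, and summing the geometric series under the integral gives F/(1 - q).
-/

open MeasureTheory

theorem hasSum_integral_geometric_mul {α 𝕜 : Type*} [MeasurableSpace α] {μ : Measure α}
    [RCLike 𝕜] {q G : α → 𝕜} {r : ℝ} (hq : AEStronglyMeasurable q μ)
    (hqr : ∀ᵐ x ∂μ, ‖q x‖ ≤ r) (hr : r < 1) (hG : Integrable G μ) :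
    HasSum (fun n : ℕ => ∫ x, q x ^ n * G x ∂μ) (∫ x, G x / (1 - q x) ∂μ) := by
  -- `max r 0` rather than `r`: when `μ = 0` the bound `hqr` does not force `0 ≤ r`.
  set ρ := max r 0
  have hρ0 : 0 ≤ ρ := le_max_right r 0
  have hρ1 : ρ < 1 := max_lt hr one_pos
  have hqρ : ∀ᵐ x ∂μ, ‖q x‖ ≤ ρ := hqr.mono fun x hx => hx.trans (le_max_left r 0)
  have hpow : ∀ n : ℕ, ∀ᵐ x ∂μ, ‖q x ^ n‖ ≤ ρ ^ n := fun n =>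
    hqρ.mono fun x hx => (norm_pow_le _ n).trans (pow_le_pow_left₀ (norm_nonneg _) hx n)
  have hint : ∀ n : ℕ, Integrable (fun x => q x ^ n * G x) μ := fun n =>
    hG.bdd_mul (hq.pow n) (hpow n)
  have hnorm_le : ∀ n : ℕ, ∫ x, ‖q x ^ n * G x‖ ∂μ ≤ ρ ^ n * ∫ x, ‖G x‖ ∂μ := fun n => by
    rw [← integral_const_mul]
    refine integral_mono_ae (hint n).norm (hG.norm.const_mul _) ((hpow n).mono fun x hx => ?_)
    simpa only [norm_mul] using mul_le_mul_of_nonneg_right hx (norm_nonneg (G x))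
  have hsum : Summable fun n : ℕ => ∫ x, ‖q x ^ n * G x‖ ∂μ :=
    Summable.of_nonneg_of_le (fun n => integral_nonneg fun x => norm_nonneg _) hnorm_le
      ((summable_geometric_of_lt_one hρ0 hρ1).mul_right _)
  have htsum : ∀ᵐ x ∂μ, ∑' n : ℕ, q x ^ n * G x = G x / (1 - q x) :=
    hqρ.mono fun x hx => by
      rw [tsum_mul_right, tsum_geometric_of_norm_lt_one (hx.trans_lt hρ1), div_eq_inv_mul]
  rw [← integral_congr_ae htsum]
  exact hasSum_integral_of_summable_integral_norm hint hsum

theorem stmt0_general (f : ℝ → ℂ) (a c : ℝ) (ha : 1 < a) (hc : 0 < c)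
    (F : ℂ → ℂ)
    (hInt : Integrable (fun t : ℝ => F (c + t * Complex.I)))
    (hInv : ∀ n : ℕ, f (a ^ n) =
      (1 / (2 * (Real.pi : ℂ))) *
        ∫ t : ℝ, (a : ℂ) ^ (-(n : ℂ) * (c + t * Complex.I)) * F (c + t * Complex.I)) :
    HasSum (fun n : ℕ => f (a ^ n))
      ((1 / (2 * (Real.pi : ℂ))) *
        ∫ t : ℝ, F (c + t * Complex.I) / (1 - (a : ℂ) ^ (-(c + t * Complex.I)))) := by
  have ha0 : 0 < a := one_pos.trans ha
  set q : ℝ → ℂ := fun t => (a : ℂ) ^ (-(c + t * Complex.I))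
  have hq_cont : Continuous q :=
    continuous_const.cpow (by fun_prop) fun _ => Or.inl (by exact_mod_cast ha0)
  have hq_norm : ∀ t, ‖q t‖ = a ^ (-c) := fun t => by
    simp [q, Complex.norm_cpow_eq_rpow_re_of_pos ha0]
  have hkernel : ∀ (n : ℕ) (t : ℝ), (a : ℂ) ^ (-(n : ℂ) * (c + t * Complex.I)) = q t ^ n :=
    fun n t => by rw [← Complex.cpow_nat_mul]; ring_nf
  have hsum := hasSum_integral_geometric_mul hq_cont.aestronglyMeasurable
    (ae_of_all _ fun t => (hq_norm t).le) (Real.rpow_lt_one_of_one_lt_of_neg ha (neg_neg_of_pos hc))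
    hInt
  simpa only [hInv, hkernel] using hsum.mul_left (1 / (2 * (Real.pi : ℂ)))

theorem stmt0 (f : ℝ → ℂ) (a c : ℝ) (ha : 1 < a) (hc : 0 < c)
    (F : ℂ → ℂ)
    (hF : ∀ s : ℂ, F s = ∫ x in Set.Ioi (0 : ℝ), (x : ℂ) ^ (s - 1) * f x)
    (hInt : Integrable (fun t : ℝ => F (c + t * Complex.I)))
    (hInv : ∀ n : ℕ, f (a ^ n) =
      (1 / (2 * (Real.pi : ℂ))) *
        ∫ t : ℝ, (a : ℂ) ^ (-(n : ℂ) * (c + t * Complex.I)) * F (c + t * Complex.I)) :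
    HasSum (fun n : ℕ => f (a ^ n))
      ((1 / (2 * (Real.pi : ℂ))) *
        ∫ t : ℝ, F (c + t * Complex.I) / (1 - (a : ℂ) ^ (-(c + t * Complex.I)))) :=
  stmt0_general f a c ha hc F hInt hInv
end

section
/- Let f : ℝ → ℂ, let s be a real number with s < 0, and let c be a real number with c > −1/s. Let F : ℂ → ℂ and assume that (i) the function t ↦ F(c + i t) is integrable on ℝ, and (ii) for every integer j ≥ 1 the inversion formula f(j^{−s}) = (1/(2π)) ∫_ℝ (j^{−s})^{−(c+it)} F(c + i t) dt holds, where (j^{−s})^{−(c+it)} = exp(s(c+it) · ln j). Then the series ∑_{j=1}^∞ f(j^{−s}) converges and ∑_{j=1}^∞ f(j^{−s}) = (1/(2π)) ∫_ℝ ζ(−s(c + i t)) F(c + i t) dt. -/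
open MeasureTheory

/-! On the line `Re w = -s c > 1` the Dirichlet series `ζ(w) = ∑ (n+1)^(-w)` converges absolutely,
with terms bounded by `(n+1)^(s c)`. Against the integrable `F` this domination lets sum and integral
be exchanged, and the `n`-th integral is, by the inversion formula, `2π f((n+1)^(-s))`. -/

lemma Complex.exp_mul_log_natCast {n : ℕ} (hn : n ≠ 0) (z : ℂ) :
    Complex.exp (z * Real.log n) = (n : ℂ) ^ z := by
  rw [Complex.cpow_def_of_ne_zero (Nat.cast_ne_zero.mpr hn), ← Complex.natCast_log, mul_comm]

lemma norm_natCast_add_one_cpow_neg_le {w : ℂ} {σ : ℝ} (hσ : σ ≤ w.re) (n : ℕ) :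
    ‖((n : ℂ) + 1) ^ (-w)‖ ≤ ((n + 1 : ℕ) : ℝ) ^ (-σ) := by
  rw [← Nat.cast_succ, Complex.norm_natCast_cpow_of_pos n.succ_pos, Complex.neg_re]
  exact Real.rpow_le_rpow_of_exponent_le (by simp) (by linarith)

theorem hasSum_integral_riemannZeta_mul {α : Type*} [MeasurableSpace α] {μ : Measure α}
    {g : α → ℂ} (hg : Integrable g μ) {w : α → ℂ} (hw : Measurable w) {σ : ℝ} (hσ : 1 < σ)
    (hre : ∀ a, σ ≤ (w a).re) :
    HasSum (fun n : ℕ => ∫ a, ((n : ℂ) + 1) ^ (-w a) * g a ∂μ)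
      (∫ a, riemannZeta (w a) * g a ∂μ) := by
  have hint : ∀ n : ℕ, Integrable (fun a => ((n : ℂ) + 1) ^ (-w a) * g a) μ := fun n =>
    hg.bdd_mul (measurable_const.pow hw.neg).aestronglyMeasurable
      (.of_forall fun a => norm_natCast_add_one_cpow_neg_le (hre a) n)
  have hsum : Summable fun n : ℕ => ∫ a, ‖((n : ℂ) + 1) ^ (-w a) * g a‖ ∂μ := by
    refine Summable.of_nonneg_of_le (fun n => integral_nonneg fun a => norm_nonneg _)
      (fun n => ?_) (((summable_nat_add_iff 1).mpr
        (Real.summable_nat_rpow.mpr (by linarith : -σ < -1))).mul_right (∫ a, ‖g a‖ ∂μ))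
    rw [← integral_const_mul]
    refine integral_mono (hint n).norm (hg.norm.const_mul _) fun a => ?_
    rw [norm_mul]
    exact mul_le_mul_of_nonneg_right (norm_natCast_add_one_cpow_neg_le (hre a) n) (norm_nonneg _)
  have hzeta : ∀ a, riemannZeta (w a) * g a = ∑' n : ℕ, ((n : ℂ) + 1) ^ (-w a) * g a := by
    intro a
    rw [zeta_eq_tsum_one_div_nat_add_one_cpow (by linarith [hre a]), ← tsum_mul_right]
    simp only [one_div, Complex.cpow_neg]
  rw [funext hzeta]
  exact hasSum_integral_of_summable_integral_norm hint hsum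

theorem stmt1 (f : ℝ → ℂ) (s c : ℝ) (hs : s < 0) (hc : c > -1 / s)
    (F : ℂ → ℂ)
    (hInt : Integrable (fun t : ℝ => F (c + t * Complex.I)))
    (hInv : ∀ j : ℕ, 1 ≤ j → f ((j : ℝ) ^ (-s)) =
      (1 / (2 * (Real.pi : ℂ))) *
        ∫ t : ℝ, Complex.exp ((s : ℂ) * (c + t * Complex.I) * Real.log j) * F (c + t * Complex.I)) :
    HasSum (fun j : ℕ => f (((j : ℝ) + 1) ^ (-s)))
      ((1 / (2 * (Real.pi : ℂ))) *
        ∫ t : ℝ, riemannZeta (-(s : ℂ) * (c + t * Complex.I)) * F (c + t * Complex.I)) := by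
  have hσ : 1 < -(s * c) := by
    have := (div_lt_iff_of_neg hs).mp hc
    linarith
  have hre : ∀ t : ℝ, -(s * c) ≤ (-(s : ℂ) * (c + t * Complex.I)).re := fun t => by simp
  have key := hasSum_integral_riemannZeta_mul hInt (by fun_prop) hσ hre
  refine (key.mul_left _).congr_fun fun n => ?_
  rw [← Nat.cast_succ, hInv (n + 1) n.succ_pos]
  congr 2
  funext t
  rw [Complex.exp_mul_log_natCast n.succ_ne_zero, neg_mul, neg_neg, Nat.cast_succ]
end

section
/- For every real number b > 0, ∑_{j=0}^∞ 2^j · cosh(2^j b)/sinh²(2^j b) = 1/(2 sinh²(b/2)). -/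
/-!
Halving the argument, `cosh x / sinh x ^ 2 = 1 / (2 sinh² (x / 2)) - 1 / sinh² x`, so with
`g j = 2 ^ j / (2 sinh² (2 ^ j b / 2))` the `j`-th term is `g j - g (j + 1)`. The series telescopes
to `g 0`, because `sinh² y ≥ y²` makes `g j ≤ 2 / (b² 2 ^ j)` tend to `0`.
-/

open Filter Topology Real

theorem hasSum_sub_succ_of_tendsto {g : ℕ → ℝ} {l : ℝ} (hg : ∀ n, g (n + 1) ≤ g n)
    (hlim : Tendsto g atTop (𝓝 l)) : HasSum (fun n => g n - g (n + 1)) (g 0 - l) := by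
  rw [hasSum_iff_tendsto_nat_of_nonneg fun n => sub_nonneg.2 (hg n)]
  simp_rw [Finset.sum_range_sub']
  exact tendsto_const_nhds.sub hlim

namespace Real

theorem sq_le_sinh_sq (x : ℝ) : x ^ 2 ≤ sinh x ^ 2 := by
  refine sq_le_sq.2 ?_
  rw [abs_sinh]
  exact self_le_sinh_iff.2 (abs_nonneg x)

/-- Both sides vanish at `x = 0`, where `1 / 0 = 0`. -/
theorem cosh_div_sinh_sq_eq_sub (x : ℝ) :
    cosh x / sinh x ^ 2 = 1 / (2 * sinh (x / 2) ^ 2) - 1 / sinh x ^ 2 := by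
  obtain ⟨y, rfl⟩ : ∃ y, x = 2 * y := ⟨x / 2, by ring⟩
  rcases eq_or_ne y 0 with rfl | hy
  · simp
  have hs : sinh y ≠ 0 := sinh_ne_zero.2 hy
  have hc : cosh y ≠ 0 := (cosh_pos y).ne'
  rw [mul_div_cancel_left₀ y two_ne_zero, sinh_two_mul, cosh_two_mul]
  field_simp
  linear_combination -cosh_sq y

theorem tendsto_two_pow_div_sinh_sq {b : ℝ} (hb : b ≠ 0) :
    Tendsto (fun j : ℕ => 2 ^ j / (2 * sinh (2 ^ j * b / 2) ^ 2)) atTop (𝓝 0) := by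
  have hbound : ∀ j : ℕ, 2 ^ j / (2 * sinh (2 ^ j * b / 2) ^ 2) ≤ 2 / b ^ 2 * (1 / 2) ^ j := by
    intro j
    calc 2 ^ j / (2 * sinh (2 ^ j * b / 2) ^ 2)
        ≤ 2 ^ j / (2 * (2 ^ j * b / 2) ^ 2) := by
          gcongr 2 ^ j / (2 * ?_)
          exact sq_le_sinh_sq _
      _ = 2 / b ^ 2 * (1 / 2) ^ j := by
          field_simp
          rw [← mul_pow]
          norm_num
  have hgeom : Tendsto (fun j : ℕ => 2 / b ^ 2 * (1 / 2 : ℝ) ^ j) atTop (𝓝 0) := by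
    simpa using (tendsto_pow_atTop_nhds_zero_of_lt_one (by norm_num : (0 : ℝ) ≤ 1 / 2)
      (by norm_num)).const_mul (2 / b ^ 2)
  exact squeeze_zero (fun j => by positivity) hbound hgeom

end Real

theorem stmt2 (b : ℝ) (hb : 0 < b) :
    HasSum (fun j : ℕ => 2 ^ j * Real.cosh (2 ^ j * b) / Real.sinh (2 ^ j * b) ^ 2)
      (1 / (2 * Real.sinh (b / 2) ^ 2)) := by
  set g : ℕ → ℝ := fun j => 2 ^ j / (2 * sinh (2 ^ j * b / 2) ^ 2)
  have hterm : ∀ j : ℕ, 2 ^ j * cosh (2 ^ j * b) / sinh (2 ^ j * b) ^ 2 = g j - g (j + 1) := by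
    intro j
    have hhalf : 2 ^ (j + 1) * b / 2 = 2 ^ j * b := by ring
    simp only [g]
    rw [hhalf, mul_div_assoc, cosh_div_sinh_sq_eq_sub, pow_succ]
    ring
  have hanti : ∀ j, g (j + 1) ≤ g j := fun j =>
    sub_nonneg.1 (hterm j ▸ by positivity)
  simpa [hterm, g] using hasSum_sub_succ_of_tendsto hanti (tendsto_two_pow_div_sinh_sq hb.ne')
end

section
/- For every real number x > 0, ∑_{k=1}^∞ (−1)^{k+1} ( coth(kx) − 1 ) = ∑_{k=1}^∞ ( 1 − tanh(kx) ). -/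
/-!
With `q = exp (-2x)` and `a k = 2 q^k / (1 - q^k)` one has `coth (k x) - 1 = a k` and
`1 - tanh (k x) = 2 q^k / (1 + q^k) = a k - 2 a (2k)`. Splitting the alternating series into
even and odd terms gives `∑ (-1)^(k+1) a k = ∑ a k - 2 ∑ a (2k)`, which is the right-hand side.
-/

noncomputable def Real.coth (x : ℝ) : ℝ := Real.cosh x / Real.sinh x

open Real

theorem tsum_neg_one_pow_mul_eq {R : Type*} [Ring R] [TopologicalSpace R] [IsTopologicalRing R]
    [T2Space R] {f : ℕ → R} (he : Summable fun k ↦ f (2 * k))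
    (ho : Summable fun k ↦ f (2 * k + 1)) :
    ∑' k, (-1) ^ k * f k = ∑' k, f k - 2 * ∑' k, f (2 * k + 1) := by
  have h_even (k : ℕ) : (-1 : R) ^ (2 * k) = 1 := by rw [pow_mul, neg_one_sq, one_pow]
  have h_odd (k : ℕ) : (-1 : R) ^ (2 * k + 1) = -1 := by rw [pow_succ, h_even, one_mul]
  rw [← tsum_even_add_odd (f := fun k ↦ (-1) ^ k * f k) (by simpa only [h_even, one_mul] using he)
    (by simpa only [h_odd, neg_one_mul] using ho.neg), ← tsum_even_add_odd he ho]
  simp only [h_even, h_odd, one_mul, neg_one_mul, tsum_neg]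
  rw [two_mul]
  abel

theorem two_mul_div_one_add_eq {K : Type*} [Field K] {t : K} (h₁ : 1 - t ≠ 0) (h₂ : 1 + t ≠ 0) :
    2 * t / (1 + t) = 2 * t / (1 - t) - 2 * (2 * t ^ 2 / (1 - t ^ 2)) := by
  have h : 1 - t ^ 2 ≠ 0 := by
    rw [show 1 - t ^ 2 = (1 - t) * (1 + t) by ring]; exact mul_ne_zero h₁ h₂
  field_simp
  ring

theorem summable_two_mul_pow_succ_div_one_sub {q : ℝ} (hq₀ : 0 ≤ q) (hq₁ : q < 1) :
    Summable fun k : ℕ ↦ 2 * q ^ (k + 1) / (1 - q ^ (k + 1)) := by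
  have hk (k : ℕ) : q ^ (k + 1) ≤ q := pow_le_of_le_one hq₀ hq₁.le (Nat.succ_ne_zero k)
  refine .of_nonneg_of_le (fun k ↦ ?_) (fun k ↦ ?_)
    (((summable_geometric_of_lt_one hq₀ hq₁).mul_left (2 * q)).div_const (1 - q))
  · exact div_nonneg (by positivity) (by linarith [hk k])
  · rw [mul_assoc, ← pow_succ']
    exact div_le_div_of_nonneg_left (by positivity) (by linarith) (by linarith [hk k])

theorem tsum_neg_one_pow_mul_eq_tsum {q : ℝ} (hq₀ : 0 ≤ q) (hq₁ : q < 1) :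
    ∑' k : ℕ, (-1) ^ k * (2 * q ^ (k + 1) / (1 - q ^ (k + 1)))
      = ∑' k : ℕ, 2 * q ^ (k + 1) / (1 + q ^ (k + 1)) := by
  set f : ℕ → ℝ := fun k ↦ 2 * q ^ (k + 1) / (1 - q ^ (k + 1)) with hf_def
  have hf : Summable f := summable_two_mul_pow_succ_div_one_sub hq₀ hq₁
  have ho : Summable fun k ↦ f (2 * k + 1) := hf.comp_injective (fun a b h ↦ by omega)
  rw [tsum_neg_one_pow_mul_eq (f := f) (hf.comp_injective (mul_right_injective₀ two_ne_zero)) ho,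
    ← tsum_mul_left, ← hf.tsum_sub (ho.mul_left 2)]
  refine tsum_congr fun k ↦ ?_
  have hk : q ^ (k + 1) < 1 := pow_lt_one₀ hq₀ hq₁ (Nat.succ_ne_zero k)
  rw [two_mul_div_one_add_eq (by linarith) (by positivity), hf_def, ← pow_mul]
  ring_nf

theorem Real.exp_neg_two_mul (y : ℝ) : exp (-2 * y) = exp (-y) ^ 2 := by
  rw [← exp_nat_mul]; ring_nf

theorem Real.coth_sub_one_eq {y : ℝ} (hy : y ≠ 0) :
    coth y - 1 = 2 * exp (-2 * y) / (1 - exp (-2 * y)) := by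
  have hs : sinh y ≠ 0 := by simpa using hy
  have h : 1 - exp (-2 * y) ≠ 0 := sub_ne_zero.mpr (Ne.symm (by simpa using hy))
  rw [coth, div_sub_one hs, sinh_eq, cosh_eq, exp_neg_two_mul, exp_neg]
  rw [sinh_eq, exp_neg] at hs
  rw [exp_neg_two_mul, exp_neg] at h
  field_simp
  ring

theorem Real.one_sub_tanh_eq (y : ℝ) :
    1 - tanh y = 2 * exp (-2 * y) / (1 + exp (-2 * y)) := by
  rw [tanh_eq, exp_neg_two_mul, exp_neg]
  have := exp_pos y
  field_simp
  ring

theorem stmt7 (x : ℝ) (hx : 0 < x) :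
    ∑' k : ℕ, (-1 : ℝ) ^ ((k + 1) + 1) * (Real.coth (((k : ℝ) + 1) * x) - 1)
      = ∑' k : ℕ, (1 - Real.tanh (((k : ℝ) + 1) * x)) := by
  have hexp (k : ℕ) : exp (-2 * (((k : ℝ) + 1) * x)) = exp (-2 * x) ^ (k + 1) := by
    rw [← exp_nat_mul]; push_cast; ring_nf
  convert tsum_neg_one_pow_mul_eq_tsum (exp_pos (-2 * x)).le (by simpa using hx) using 3 with k k
  · rw [pow_succ, pow_succ, coth_sub_one_eq (by positivity), hexp]; ring
  · rw [one_sub_tanh_eq, hexp]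
end

section
/- For every real number b > 1, ∑_{k=2}^∞ k·(−1)^k / (b^{k−1} − 1) = ∑_{n=1}^∞ (1 + 2·bⁿ) / (1 + bⁿ)². -/
theorem stmt8 (b : ℝ) (hb : 1 < b) :
    ∑' k : ℕ, ((k : ℝ) + 2) * (-1 : ℝ) ^ (k + 2) / (b ^ (k + 1) - 1)
      = ∑' n : ℕ, (1 + 2 * b ^ (n + 1)) / (1 + b ^ (n + 1)) ^ 2 := by
  have hb0 : (0:ℝ) < b := lt_trans one_pos hb
  set x : ℝ := b⁻¹ with hxdef
  have hx0 : 0 < x := inv_pos.2 hb0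
  have hx1 : x < 1 := by
    rw [hxdef, inv_lt_one_iff₀]; right; exact hb
  set f : ℕ → ℕ → ℝ := fun k m => ((k:ℝ)+2) * (-1:ℝ)^k * x^((k+1)*(m+1)) with hfdef
  have hxk0 : ∀ k : ℕ, (0:ℝ) ≤ x ^ (k+1) := fun k => pow_nonneg hx0.le _
  have hxk1 : ∀ k : ℕ, x ^ (k+1) < 1 := fun k => pow_lt_one₀ hx0.le hx1 (Nat.succ_ne_zero k)
  have hBk : ∀ k : ℕ, (1:ℝ) < b ^ (k+1) := fun k => one_lt_pow₀ hb (Nat.succ_ne_zero k)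
  have hxB : ∀ k : ℕ, x ^ (k+1) = (b ^ (k+1))⁻¹ := fun k => by rw [hxdef, inv_pow]
  -- row sums
  have hrow : ∀ k : ℕ, HasSum (fun m => f k m)
      ((((k:ℝ)+2) * (-1:ℝ)^k * x^(k+1)) * (1 - x^(k+1))⁻¹) := by
    intro k
    have h := (hasSum_geometric_of_lt_one (hxk0 k) (hxk1 k)).mul_left
      (((k:ℝ)+2) * (-1:ℝ)^k * x^(k+1))
    refine h.congr_fun fun m => ?_
    simp only [hfdef, pow_mul, pow_succ']
    ring
  have hrowval : ∀ k : ℕ, (((k:ℝ)+2) * (-1:ℝ)^k * x^(k+1)) * (1 - x^(k+1))⁻¹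
      = ((k:ℝ)+2) * (-1:ℝ)^(k+2) / (b^(k+1) - 1) := by
    intro k
    have h1 : b^(k+1) ≠ 0 := (lt_trans one_pos (hBk k)).ne'
    have h2 : b^(k+1) - 1 ≠ 0 := sub_ne_zero.2 (hBk k).ne'
    rw [hxB k, pow_add]
    field_simp
    ring
  -- column sums
  have hcol : ∀ n : ℕ, HasSum (fun k => f k n)
      ((1 + 2 * b^(n+1)) / (1 + b^(n+1))^2) := by
    intro n
    set z : ℝ := -(x^(n+1)) with hzdef
    have hznorm : ‖z‖ < 1 := by
      rw [hzdef, norm_neg, Real.norm_eq_abs, abs_of_nonneg (hxk0 n)]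
      exact hxk1 n
    have h1 : HasSum (fun k:ℕ => ((k:ℝ)) * z^k) (z/(1-z)^2) :=
      hasSum_coe_mul_geometric_of_norm_lt_one hznorm
    have h2 : HasSum (fun k:ℕ => ((k:ℝ)+1) * z^(k+1)) (z/(1-z)^2) := by
      have := (hasSum_nat_add_iff (f := fun k:ℕ => ((k:ℝ))*z^k) 1).2 (by simpa using h1)
      refine this.congr_fun fun k => ?_
      push_cast
      ring
    have h3 : HasSum (fun k:ℕ => z^(k+1)) (z * (1-z)⁻¹) := by
      have := (hasSum_geometric_of_norm_lt_one hznorm).mul_left z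
      refine this.congr_fun fun k => ?_
      rw [pow_succ']
    have h4 := (h2.add h3).neg
    have hfz : ∀ k : ℕ, f k n = -((((k:ℝ)+1) * z^(k+1)) + z^(k+1)) := by
      intro k
      have hz1 : z^(k+1) = -((-1:ℝ)^k * x^((k+1)*(n+1))) := by
        rw [hzdef, neg_pow, pow_succ (-1:ℝ) k, ← pow_mul]
        ring_nf
      rw [hz1, hfdef]
      ring
    have hval : -(z/(1-z)^2 + z * (1-z)⁻¹) = (1 + 2 * b^(n+1)) / (1 + b^(n+1))^2 := by
      have hB0 : b^(n+1) ≠ 0 := (lt_trans one_pos (hBk n)).ne'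
      have hB1 : (1:ℝ) + b^(n+1) ≠ 0 := by positivity
      rw [hzdef, hxB n]
      have hz1 : (1:ℝ) - -(b^(n+1))⁻¹ = (1 + b^(n+1))/(b^(n+1)) := by
        field_simp
        ring
      rw [hz1]
      field_simp
      ring
    rw [← hval]
    exact h4.congr_fun hfz
  -- double summability
  have hxnorm : ‖x‖ < 1 := by rw [Real.norm_eq_abs, abs_of_nonneg hx0.le]; exact hx1
  have hmaj : Summable (fun k : ℕ => (((k:ℝ)+2) * x^(k+1)) * (1 - x)⁻¹) := by
    have h1 : HasSum (fun k:ℕ => ((k:ℝ)) * x^k) (x/(1-x)^2) :=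
      hasSum_coe_mul_geometric_of_norm_lt_one hxnorm
    have h2 : HasSum (fun k:ℕ => ((k:ℝ)+1) * x^(k+1)) (x/(1-x)^2) := by
      have := (hasSum_nat_add_iff (f := fun k:ℕ => ((k:ℝ))*x^k) 1).2 (by simpa using h1)
      refine this.congr_fun fun k => ?_
      push_cast; ring
    have h3 : HasSum (fun k:ℕ => x^(k+1)) (x * (1-x)⁻¹) := by
      have := (hasSum_geometric_of_norm_lt_one hxnorm).mul_left x
      refine this.congr_fun fun k => ?_
      rw [pow_succ']
    have h4 := ((h2.add h3).summable).mul_right (1-x)⁻¹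
    refine h4.congr fun k => ?_
    ring
  have hrowabs : ∀ k : ℕ, HasSum (fun m => |f k m|)
      ((((k:ℝ)+2) * x^(k+1)) * (1 - x^(k+1))⁻¹) := by
    intro k
    have h := (hasSum_geometric_of_lt_one (hxk0 k) (hxk1 k)).mul_left
      (((k:ℝ)+2) * x^(k+1))
    refine h.congr_fun fun m => ?_
    have : |f k m| = ((k:ℝ)+2) * x^((k+1)*(m+1)) := by
      rw [hfdef]
      rw [abs_mul, abs_mul, abs_pow, abs_neg, abs_one, one_pow, mul_one,
        abs_of_nonneg (pow_nonneg hx0.le _), abs_of_nonneg (by positivity : (0:ℝ) ≤ (k:ℝ)+2)]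
    rw [this, pow_mul, pow_succ']
    ring
  have habs : Summable (fun p : ℕ × ℕ => |f p.1 p.2|) := by
    rw [summable_prod_of_nonneg (fun p => abs_nonneg _)]
    constructor
    · intro k; exact (hrowabs k).summable
    · refine Summable.of_nonneg_of_le (fun k => ?_) (fun k => ?_) hmaj
      · rw [(hrowabs k).tsum_eq]
        have : (0:ℝ) < 1 - x^(k+1) := by linarith [hxk1 k]
        positivity
      · rw [(hrowabs k).tsum_eq]
        have h1 : (0:ℝ) < 1 - x := by linarith
        have h2 : (0:ℝ) < 1 - x^(k+1) := by linarith [hxk1 k]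
        have h3 : x^(k+1) ≤ x := by
          calc x^(k+1) ≤ x^1 := pow_le_pow_of_le_one hx0.le hx1.le (by omega)
          _ = x := pow_one x
        have h4 : (1 - x^(k+1))⁻¹ ≤ (1 - x)⁻¹ := by
          apply inv_anti₀ h1
          linarith
        have h5 : (0:ℝ) ≤ ((k:ℝ)+2) * x^(k+1) := by positivity
        exact mul_le_mul_of_nonneg_left h4 h5
  have hF : Summable (Function.uncurry f) := by
    apply Summable.of_abs
    exact habs
  -- conclude
  calc ∑' k : ℕ, ((k : ℝ) + 2) * (-1 : ℝ) ^ (k + 2) / (b ^ (k + 1) - 1)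
      = ∑' k : ℕ, ∑' m : ℕ, f k m := by
        refine tsum_congr fun k => ?_
        rw [(hrow k).tsum_eq, hrowval k]
    _ = ∑' m : ℕ, ∑' k : ℕ, f k m := (Summable.tsum_comm hF).symm
    _ = ∑' n : ℕ, (1 + 2 * b ^ (n + 1)) / (1 + b ^ (n + 1)) ^ 2 := by
        refine tsum_congr fun n => ?_
        rw [(hcol n).tsum_eq]
end

section
/- For every real number b > 1, with q = exp(2π²/ln(b)), the identity ∑_{n=1}^∞ bⁿ/(1 + bⁿ)² − 1/(2 ln(b)) = −1/8 + (4π²/ln²(b)) · ∑_{j=0}^∞ q^{1+2j}/(q^{1+2j} − 1)² holds. -/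
/-!
Poisson summation for `f(x) = bˣ / (1 + bˣ)² = σ'(x log b)`, `σ` the sigmoid. The substitution
`t = σ(y)` turns the Fourier transform of `f` into the Beta integral `B(1 - ic, 1 + ic)` with
`c = 2πξ / log b`, i.e. `πc / sinh(πc) / log b`. Expanding `1 / sinh` as a geometric series in
`q⁻¹` and summing the resulting double series the other way round gives the Lambert series
`∑ⱼ q^(2j+1) / (q^(2j+1) - 1)²`.
-/

open Real Complex MeasureTheory Filter Asymptotics FourierTransform

lemma one_sub_sigmoid_eq_mul_exp_neg (y : ℝ) : 1 - sigmoid y = sigmoid y * rexp (-y) := by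
  rw [sigmoid_mul_rexp_neg, sigmoid_neg]

lemma sigmoid_mul_one_sub_sigmoid_le (y : ℝ) : sigmoid y * (1 - sigmoid y) ≤ rexp (-|y|) := by
  have hle (z : ℝ) : sigmoid z ≤ rexp z := by
    rw [sigmoid_def, ← inv_inv (rexp z), ← Real.exp_neg]
    gcongr
    linarith [exp_pos (-z)]
  have h₁ := hle y
  have h₂ : 1 - sigmoid y ≤ rexp (-y) := sigmoid_neg y ▸ hle (-y)
  rcases le_total 0 y with hy | hy
  · rw [abs_of_nonneg hy]
    exact (mul_le_of_le_one_left (sub_nonneg.mpr (sigmoid_le_one y)) (sigmoid_le_one y)).trans h₂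
  · rw [abs_of_nonpos hy, neg_neg]
    exact (mul_le_of_le_one_right (sigmoid_nonneg y) (by linarith [sigmoid_nonneg y])).trans h₁

lemma ofReal_sigmoid_cpow_neg_mul_one_sub_cpow (y : ℝ) (s : ℂ) :
    (sigmoid y : ℂ) ^ (-s) * (1 - (sigmoid y : ℂ)) ^ s = cexp (-(s * y)) := by
  have hexp : ((rexp (-y) : ℝ) : ℂ) ^ s = cexp (-(s * y)) := by
    rw [cpow_def_of_ne_zero (ofReal_ne_zero.mpr (exp_pos _).ne'),
      ← ofReal_log (exp_pos _).le, Real.log_exp]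
    push_cast
    ring_nf
  rw [← ofReal_one, ← ofReal_sub, one_sub_sigmoid_eq_mul_exp_neg, ofReal_mul,
    mul_cpow_ofReal_nonneg (sigmoid_nonneg y) (exp_pos _).le, cpow_neg, ← mul_assoc,
    inv_mul_cancel₀ (by simp [cpow_eq_zero_iff, (sigmoid_pos y).ne']), one_mul, hexp]

theorem integral_cexp_neg_mul_sigmoid_mul_one_sub {s : ℂ} (hs : |s.re| < 1) :
    ∫ y : ℝ, cexp (-(s * y)) * ((sigmoid y * (1 - sigmoid y) : ℝ) : ℂ)
      = Complex.Gamma (1 - s) * Complex.Gamma (1 + s) := by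
  obtain ⟨hs₁, hs₂⟩ := abs_lt.mp hs
  have hbeta : Complex.Gamma (1 - s) * Complex.Gamma (1 + s)
      = ∫ t in Set.Ioo (0 : ℝ) 1, (t : ℂ) ^ (-s) * (1 - (t : ℂ)) ^ s := by
    rw [Gamma_mul_Gamma_eq_betaIntegral (by rw [sub_re, one_re]; linarith)
      (by rw [add_re, one_re]; linarith), sub_add_add_cancel, one_add_one_eq_two,
      Complex.Gamma_ofNat_eq_factorial, Nat.factorial_one, Nat.cast_one, one_mul, betaIntegral,
      sub_sub_cancel_left, add_sub_cancel_left, intervalIntegral.integral_of_le zero_le_one,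
      integral_Ioc_eq_integral_Ioo]
  -- substitute `t = σ y`
  rw [hbeta, ← range_sigmoid, ← Set.image_univ,
    integral_image_eq_integral_abs_deriv_smul MeasurableSet.univ
      (fun y _ => (hasDerivAt_sigmoid y).hasDerivWithinAt) sigmoid_injective.injOn,
    Measure.restrict_univ]
  refine integral_congr_ae (Eventually.of_forall fun y => ?_)
  dsimp only
  rw [abs_of_nonneg (mul_nonneg (sigmoid_nonneg y) (sub_nonneg.mpr (sigmoid_le_one y))),
    ofReal_sigmoid_cpow_neg_mul_one_sub_cpow, real_smul, mul_comm]

theorem Complex.Gamma_one_sub_mul_I_mul_Gamma_one_add_mul_I {c : ℝ} (hc : c ≠ 0) :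
    Complex.Gamma (1 - c * I) * Complex.Gamma (1 + c * I)
      = ((π * c / Real.sinh (π * c) : ℝ) : ℂ) := by
  have hcI : (c : ℂ) * I ≠ 0 := mul_ne_zero (ofReal_ne_zero.mpr hc) I_ne_zero
  have hsin : Complex.sin (π * (c * I)) = (Real.sinh (π * c) : ℂ) * I := by
    rw [← mul_assoc, ← ofReal_mul, sin_mul_I, ofReal_sinh]
  have hsinh : Real.sinh (π * c) ≠ 0 := by simpa using mul_ne_zero pi_ne_zero hc
  rw [add_comm, Complex.Gamma_add_one _ hcI, mul_comm, mul_assoc, Complex.Gamma_mul_Gamma_one_sub,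
    hsin]
  push_cast
  field_simp

lemma self_div_sinh_eq (t : ℝ) : t / Real.sinh t = 2 * t * rexp (-t) / (1 - rexp (-t) ^ 2) := by
  rcases eq_or_ne t 0 with rfl | ht
  · simp
  have hsinh : Real.sinh t ≠ 0 := by simpa using ht
  have hden : 1 - rexp (-t) ^ 2 ≠ 0 := by
    rw [← Real.exp_nat_mul, sub_ne_zero, ne_comm, Ne, Real.exp_eq_one_iff]; simpa using ht
  rw [Real.sinh_eq] at hsinh ⊢
  rw [Real.exp_neg] at hden ⊢
  field_simp

lemma inv_div_one_sub_inv_sq {q : ℝ} (hq : q ≠ 0) :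
    q⁻¹ / (1 - q⁻¹) ^ 2 = q / (q - 1) ^ 2 := by
  rcases eq_or_ne q 1 with rfl | hq₁
  · simp
  have : q - 1 ≠ 0 := sub_ne_zero.mpr hq₁
  field_simp

section Lambert

variable {𝕜 : Type*} [NontriviallyNormedField 𝕜] [CompleteSpace 𝕜] [NormSMulClass ℤ 𝕜]

theorem hasSum_pnat_mul_pow_div_one_sub_sq {x : 𝕜} (hx : ‖x‖ < 1) :
    HasSum (fun n : ℕ+ => (n : 𝕜) * x ^ (n : ℕ) / (1 - (x ^ (n : ℕ)) ^ 2))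
      (∑' j : ℕ, x ^ (1 + 2 * j) / (1 - x ^ (1 + 2 * j)) ^ 2) := by
  have hpow {m : ℕ} (hm : m ≠ 0) : ‖x ^ m‖ < 1 := by
    rw [norm_pow]; exact pow_lt_one₀ (norm_nonneg x) hx hm
  set G : ℕ × ℕ+ → 𝕜 := fun p => (p.2 : 𝕜) * x ^ ((p.2 : ℕ) * (1 + 2 * p.1))
  have hG : Summable G := by
    have hinj :
        Function.Injective fun p : ℕ × ℕ+ => ((⟨1 + 2 * p.1, by omega⟩ : ℕ+), p.2) := by
      rintro ⟨j, n⟩ ⟨j', n'⟩ h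
      simp only [Prod.mk.injEq, Subtype.mk.injEq] at h
      exact Prod.ext (by omega) h.2
    refine ((summable_prod_mul_pow 1 hx).comp_injective hinj).congr fun p => ?_
    show ((p.2 : ℕ) : 𝕜) ^ 1 * x ^ ((1 + 2 * p.1) * (p.2 : ℕ)) = _
    rw [pow_one, mul_comm (1 + 2 * p.1)]
  have hrow (j : ℕ) : HasSum (fun n : ℕ+ => G (j, n))
      (x ^ (1 + 2 * j) / (1 - x ^ (1 + 2 * j)) ^ 2) := by
    have h := hasSum_pnat_iff (f := fun n : ℕ => (n : 𝕜) * (x ^ (1 + 2 * j)) ^ n) |>.mpr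
      (by simpa using hasSum_coe_mul_geometric_of_norm_lt_one (hpow (m := 1 + 2 * j) (by omega)))
    exact h.congr_fun fun n => by simp only [G, ← pow_mul, mul_comm]
  have hcol (n : ℕ+) : HasSum (fun j : ℕ => G (j, n))
      ((n : 𝕜) * x ^ (n : ℕ) / (1 - (x ^ (n : ℕ)) ^ 2)) := by
    have hsq : ‖(x ^ (n : ℕ)) ^ 2‖ < 1 := by
      rw [← pow_mul]; exact hpow (by positivity)
    rw [div_eq_mul_inv]
    refine ((hasSum_geometric_of_norm_lt_one hsq).mul_left _).congr_fun fun j => ?_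
    simp only [G]
    ring
  have htot := hG.hasSum
  rw [(htot.prod_fiberwise hrow).tsum_eq]
  exact ((Equiv.prodComm _ _).hasSum_iff.mpr htot).prod_fiberwise hcol
end Lambert

theorem HasSum.int_of_even {G : Type*} [AddCommGroup G] [TopologicalSpace G]
    [IsTopologicalAddGroup G] {f : ℤ → G} {a : G} (hf : f.Even)
    (h : HasSum (fun n : ℕ+ => f n) a) : HasSum f (f 0 + 2 • a) := by
  have h₁ : HasSum (fun n : ℕ => f n) (a + f 0) := hasSum_pnat_iff.mp h
  have h₂ : HasSum (fun n : ℕ => f (-(n + 1))) a :=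
    ((hasSum_pnat_iff_hasSum_succ (f := fun n : ℕ => f n)).mp h).congr_fun fun n => by
      rw [hf]; push_cast; rfl
  have := h₁.of_nat_of_neg_add_one h₂
  rwa [add_comm a, add_assoc, ← two_nsmul] at this

noncomputable def logisticKernel (L x : ℝ) : ℂ :=
  ((sigmoid (L * x) * (1 - sigmoid (L * x)) : ℝ) : ℂ)

lemma continuous_logisticKernel (L : ℝ) : Continuous (logisticKernel L) := by
  unfold logisticKernel; fun_prop

lemma logisticKernel_isBigO {L : ℝ} (hL : 0 < L) (s : ℝ) :
    logisticKernel L =O[cocompact ℝ] fun x => |x| ^ s := by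
  have hexp : (fun x : ℝ => rexp (-L * |x|)) =O[cocompact ℝ] fun x => |x| ^ s := by
    rw [cocompact_eq_atBot_atTop, ← Filter.comap_abs_atTop]
    exact ((isLittleO_exp_neg_mul_rpow_atTop hL s).comp_tendsto tendsto_comap).isBigO
  refine (isBigO_of_le _ fun x => ?_).trans hexp
  rw [logisticKernel, norm_real, norm_of_nonneg (mul_nonneg (sigmoid_nonneg _)
    (sub_nonneg.mpr (sigmoid_le_one _))), norm_of_nonneg (exp_pos _).le]
  calc _ ≤ rexp (-|L * x|) := sigmoid_mul_one_sub_sigmoid_le _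
    _ = rexp (-L * |x|) := by rw [abs_mul, abs_of_pos hL, neg_mul]

lemma logisticKernel_neg (L x : ℝ) : logisticKernel L (-x) = logisticKernel L x := by
  simp only [logisticKernel, mul_neg, sigmoid_neg, sub_sub_cancel, mul_comm]

lemma logisticKernel_log_natCast {b : ℝ} (hb : 0 < b) (n : ℕ) :
    logisticKernel (Real.log b) n = ((b ^ n / (1 + b ^ n) ^ 2 : ℝ) : ℂ) := by
  have hbn : 0 < b ^ n := pow_pos hb n
  have hσ : sigmoid (Real.log b * n) = b ^ n / (1 + b ^ n) := by
    rw [sigmoid_def, mul_comm, ← Real.log_pow, Real.exp_neg, exp_log hbn]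
    field_simp
    ring
  rw [logisticKernel, hσ]
  congr 1
  field_simp
  ring

theorem fourier_logisticKernel {L : ℝ} (hL : 0 < L) (ξ : ℝ) :
    𝓕 (logisticKernel L) ξ
      = Complex.Gamma (1 - (2 * π * ξ / L : ℝ) * I)
        * Complex.Gamma (1 + (2 * π * ξ / L : ℝ) * I) / L := by
  set s : ℂ := (2 * π * ξ / L : ℝ) * I
  have hphase (v : ℝ) : cexp (↑(-2 * π * v * ξ) * I) = cexp (-(s * ↑(L * v))) := by
    congr 1
    simp only [s]
    push_cast
    field_simp [hL.ne']
  rw [Real.fourier_real_eq_integral_exp_smul]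
  simp_rw [hphase, logisticKernel, smul_eq_mul]
  rw [Measure.integral_comp_mul_left
      (fun y : ℝ => cexp (-(s * y)) * ((sigmoid y * (1 - sigmoid y) : ℝ) : ℂ)),
    integral_cexp_neg_mul_sigmoid_mul_one_sub (by simp [s]), abs_inv, abs_of_pos hL, real_smul,
    ofReal_inv, inv_mul_eq_div]

lemma fourier_logisticKernel_neg {L : ℝ} (hL : 0 < L) (ξ : ℝ) :
    𝓕 (logisticKernel L) (-ξ) = 𝓕 (logisticKernel L) ξ := by
  simp only [fourier_logisticKernel hL, mul_neg, neg_div, ofReal_neg, neg_mul, sub_neg_eq_add,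
    ← sub_eq_add_neg, mul_comm (Complex.Gamma (1 + _))]

lemma fourier_logisticKernel_zero {L : ℝ} (hL : 0 < L) :
    𝓕 (logisticKernel L) 0 = ((1 / L : ℝ) : ℂ) := by
  simp [fourier_logisticKernel hL]

lemma fourier_logisticKernel_pnat {L : ℝ} (hL : 0 < L) (n : ℕ+) :
    𝓕 (logisticKernel L) n
      = ((4 * π ^ 2 / L ^ 2 * ((n : ℝ) * (rexp (2 * π ^ 2 / L))⁻¹ ^ (n : ℕ)
        / (1 - ((rexp (2 * π ^ 2 / L))⁻¹ ^ (n : ℕ)) ^ 2)) : ℝ) : ℂ) := by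
  have hc : 2 * π * (n : ℝ) / L ≠ 0 := by positivity
  rw [← Real.exp_neg, fourier_logisticKernel hL,
    Complex.Gamma_one_sub_mul_I_mul_Gamma_one_add_mul_I hc, ← ofReal_div, self_div_sinh_eq]
  congr 1
  rw [← Real.exp_nat_mul, ← Real.exp_nat_mul, ← Real.exp_nat_mul]
  field_simp
  ring

theorem hasSum_fourier_logisticKernel_int {L : ℝ} (hL : 0 < L) :
    HasSum (fun n : ℤ => 𝓕 (logisticKernel L) n)
      ((1 / L + 2 * (4 * π ^ 2 / L ^ 2) * ∑' j : ℕ, rexp (2 * π ^ 2 / L) ^ (1 + 2 * j)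
        / (rexp (2 * π ^ 2 / L) ^ (1 + 2 * j) - 1) ^ 2 : ℝ) : ℂ) := by
  set q := rexp (2 * π ^ 2 / L)
  have hq : ‖q⁻¹‖ < 1 := by
    rw [← Real.exp_neg, norm_of_nonneg (exp_pos _).le, Real.exp_lt_one_iff, neg_lt_zero]
    positivity
  have hlambert : ∑' j : ℕ, q⁻¹ ^ (1 + 2 * j) / (1 - q⁻¹ ^ (1 + 2 * j)) ^ 2
      = ∑' j : ℕ, q ^ (1 + 2 * j) / (q ^ (1 + 2 * j) - 1) ^ 2 :=
    tsum_congr fun j => by rw [inv_pow, inv_div_one_sub_inv_sq (pow_ne_zero _ (exp_pos _).ne')]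
  have hpnat := Complex.hasSum_ofReal.mpr
    ((hasSum_pnat_mul_pow_div_one_sub_sq hq).mul_left (4 * π ^ 2 / L ^ 2))
  rw [hlambert] at hpnat
  have hsum := HasSum.int_of_even (f := fun n : ℤ => 𝓕 (logisticKernel L) n)
    (fun n => by simpa using fourier_logisticKernel_neg hL n)
    (hpnat.congr_fun fun n => fourier_logisticKernel_pnat hL n)
  rw [Int.cast_zero, fourier_logisticKernel_zero hL, nsmul_eq_mul] at hsum
  push_cast at hsum ⊢
  rwa [mul_assoc 2]

lemma tsum_logisticKernel_log_int {b : ℝ} (hb : 1 < b) :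
    ∑' n : ℤ, logisticKernel (Real.log b) n
      = ((1 / 4 + 2 * ∑' n : ℕ, b ^ (n + 1) / (1 + b ^ (n + 1)) ^ 2 : ℝ) : ℂ) := by
  have hb₀ : 0 < b := by linarith
  have hK : Function.Even fun n : ℤ => logisticKernel (Real.log b) n := fun n => by
    simpa using logisticKernel_neg (Real.log b) n
  have hKsum : Summable fun n : ℤ => logisticKernel (Real.log b) n :=
    summable_of_isBigO (Real.summable_abs_int_rpow one_lt_two)
      ((logisticKernel_isBigO (Real.log_pos hb) _).comp_tendsto Int.tendsto_coe_cofinite)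
  have hK₀ : logisticKernel (Real.log b) ((0 : ℤ) : ℝ) = ((1 / 4 : ℝ) : ℂ) := by
    rw [Int.cast_zero, ← Nat.cast_zero, logisticKernel_log_natCast hb₀]
    norm_num
  rw [tsum_int_eq_zero_add_two_mul_tsum_pnat hK hKsum, hK₀,
    tsum_pnat_eq_tsum_succ (f := fun n : ℕ => logisticKernel (Real.log b) ((n : ℤ) : ℝ)),
    nsmul_eq_mul]
  push_cast
  congr 2
  exact tsum_congr fun n => by simpa using logisticKernel_log_natCast hb₀ (n + 1)

theorem stmt9 (b : ℝ) (hb : 1 < b) (q : ℝ) (hq : q = Real.exp (2 * Real.pi ^ 2 / Real.log b)) :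
    (∑' n : ℕ, b ^ (n + 1) / (1 + b ^ (n + 1)) ^ 2) - 1 / (2 * Real.log b)
      = -1 / 8 + (4 * Real.pi ^ 2 / Real.log b ^ 2) *
          ∑' j : ℕ, q ^ (1 + 2 * j) / (q ^ (1 + 2 * j) - 1) ^ 2 := by
  subst hq
  have hL : 0 < Real.log b := Real.log_pos hb
  have hdual := hasSum_fourier_logisticKernel_int hL
  have poisson := Real.tsum_eq_tsum_fourier_of_rpow_decay_of_summable
    (continuous_logisticKernel _) one_lt_two (logisticKernel_isBigO hL _) hdual.summable 0
  simp only [zero_add, QuotientAddGroup.mk_zero, fourier_eval_zero, mul_one] at poisson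
  rw [tsum_logisticKernel_log_int hb, hdual.tsum_eq, ofReal_inj] at poisson
  linarith [show 1 / (2 * Real.log b) = 1 / Real.log b / 2 by ring]
end

section
/- The limit as b tends to 1 from above of ( ∑_{j=1}^∞ b^j/(1 + b^j)² − 1/(2 ln(b)) ) equals −1/8. -/
/-!
Put `t = log b` and let `σ` be the logistic sigmoid, so that `σ' = σ (1 - σ)` and the `j`-th term
of the series is `σ' (j t)`. Since `|σ'''(x)| ≤ exp (-x)`, the midpoint rule gives
`t σ' ((j + 1) t) = σ ((j + 3/2) t) - σ ((j + 1/2) t) + O(t³ exp (-j t))`, and telescoping yields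
`t ∑ σ' ((j + 1) t) = 1 - σ (t / 2) + O(t²)`. Hence the expression equals
`-(σ (t / 2) - σ 0) / t + O(t)`, which tends to `-σ' 0 / 2 = -1/8`.
-/

open Filter Real Set Topology

lemma abs_sub_sub_two_mul_le_of_hasDerivAt {F f f' f'' : ℝ → ℝ} {m h K : ℝ} (hh : 0 ≤ h)
    (hF : ∀ x ∈ Icc (m - h) (m + h), HasDerivAt F (f x) x)
    (hf : ∀ x ∈ Icc (m - h) (m + h), HasDerivAt f (f' x) x)
    (hf' : ∀ x ∈ Icc (m - h) (m + h), HasDerivAt f' (f'' x) x)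
    (hK : ∀ x ∈ Icc (m - h) (m + h), |f'' x| ≤ K) :
    |F (m + h) - F (m - h) - 2 * h * f m| ≤ 2 * K * h ^ 3 := by
  have hmem : ∀ w ∈ Icc 0 h, m + w ∈ Icc (m - h) (m + h) ∧ m - w ∈ Icc (m - h) (m + h) :=
    fun w ⟨hw₀, hwh⟩ => ⟨⟨by linarith, by linarith⟩, ⟨by linarith, by linarith⟩⟩
  have hK₀ : 0 ≤ K := (abs_nonneg _).trans (hK m ⟨by linarith, by linarith⟩)
  have mvt : ∀ (g g' : ℝ → ℝ) (C : ℝ), (∀ w ∈ Icc 0 h, HasDerivAt g (g' w) w) →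
      (∀ w ∈ Icc 0 h, |g' w| ≤ C) → ∀ w ∈ Icc 0 h, |g w - g 0| ≤ C * w :=
    fun g g' C hg hC w hw => by
    simpa using norm_image_sub_le_of_norm_deriv_le_segment'
      (fun x hx => (hg x hx).hasDerivWithinAt) (fun x hx => hC x (Ico_subset_Icc_self hx)) w hw
  have hodd : ∀ w ∈ Icc 0 h, |f' (m + w) - f' (m - w)| ≤ 2 * K * w := fun w hw => by
    simpa using mvt (fun v => f' (m + v) - f' (m - v)) (fun v => f'' (m + v) + f'' (m - v)) (2 * K)
      (fun v hv => (((hf' _ (hmem v hv).1).comp_const_add m v).sub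
          ((hf' _ (hmem v hv).2).comp_const_sub m v)).congr_deriv (sub_neg_eq_add _ _))
      (fun v hv => (abs_add_le _ _).trans (by linarith [hK _ (hmem v hv).1, hK _ (hmem v hv).2]))
      w hw
  have heven : ∀ w ∈ Icc 0 h, |f (m + w) + f (m - w) - 2 * f m| ≤ 2 * K * h * w := fun w hw => by
    have := mvt (fun v => f (m + v) + f (m - v)) (fun v => f' (m + v) - f' (m - v)) (2 * K * h)
      (fun v hv => ((hf _ (hmem v hv).1).comp_const_add m v).add
          ((hf _ (hmem v hv).2).comp_const_sub m v))
      (fun v hv => (hodd v hv).trans (by nlinarith [hv.2])) w hw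
    simpa [two_mul] using this
  have := mvt (fun v => F (m + v) - F (m - v) - 2 * v * f m)
    (fun v => f (m + v) + f (m - v) - 2 * f m) (2 * K * h ^ 2)
    (fun v hv => ((((hF _ (hmem v hv).1).comp_const_add m v).sub
        ((hF _ (hmem v hv).2).comp_const_sub m v)).sub
          (((hasDerivAt_id v).const_mul 2).mul_const (f m))).congr_deriv (by ring))
    (fun v hv => (heven v hv).trans (by nlinarith [mul_nonneg hK₀ hh, hv.2])) h ⟨hh, le_rfl⟩
  simpa [pow_succ, mul_assoc] using this

lemma Monotone.hasSum_sub_of_tendsto {f : ℕ → ℝ} {l : ℝ} (hf : Monotone f)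
    (hl : Tendsto f atTop (𝓝 l)) : HasSum (fun n => f (n + 1) - f n) (l - f 0) := by
  rw [hasSum_iff_tendsto_nat_of_nonneg (fun n => sub_nonneg.2 (hf n.le_succ))]
  simpa only [Finset.sum_range_sub] using hl.sub_const (f 0)

lemma abs_tsum_sub_le_of_hasSum {ι : Type*} {a d ε : ι → ℝ} {S E : ℝ} (hd : HasSum d S)
    (hε : HasSum ε E) (h : ∀ i, |a i - d i| ≤ ε i) : |∑' i, a i - S| ≤ E := by
  have h' : ∀ i, ‖a i - d i‖ ≤ ε i := fun i => (norm_eq_abs _).trans_le (h i)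
  have hsum : Summable (fun i => a i - d i) := hε.summable.of_norm_bounded h'
  rw [show (fun i => a i) = fun i => (a i - d i) + d i by simp, (hsum.hasSum.add hd).tsum_eq,
    add_sub_cancel_right]
  exact tsum_of_norm_bounded hε h'

noncomputable def logisticDensity (x : ℝ) : ℝ := sigmoid x * (1 - sigmoid x)

lemma logisticDensity_eq (x : ℝ) : logisticDensity x = exp x / (1 + exp x) ^ 2 := by
  rw [logisticDensity, ← sigmoid_neg, sigmoid_def, sigmoid_def, neg_neg, exp_neg]
  field_simp
  ring

lemma hasDerivAt_logisticDensity (x : ℝ) :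
    HasDerivAt logisticDensity (logisticDensity x * (1 - 2 * sigmoid x)) x :=
  ((hasDerivAt_sigmoid x).mul ((hasDerivAt_sigmoid x).const_sub 1)).congr_deriv
    (by unfold logisticDensity; ring)

lemma hasDerivAt_logisticDensity_mul_one_sub_two_mul_sigmoid (x : ℝ) :
    HasDerivAt (fun y => logisticDensity y * (1 - 2 * sigmoid y))
      (logisticDensity x * (1 - 6 * sigmoid x + 6 * sigmoid x ^ 2)) x :=
  ((hasDerivAt_logisticDensity x).mul
    (((hasDerivAt_sigmoid x).const_mul 2).const_sub 1)).congr_deriv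
      (by unfold logisticDensity; ring)

lemma logisticDensity_le_exp_neg (x : ℝ) : logisticDensity x ≤ exp (-x) := by
  have h : 1 - sigmoid x = sigmoid x * exp (-x) := by rw [sigmoid_mul_rexp_neg, sigmoid_neg]
  have := sigmoid_pos x
  have := sigmoid_lt_one x
  rw [logisticDensity, h]
  nlinarith [exp_pos (-x)]

lemma abs_deriv_logisticDensity_le_exp_neg (x : ℝ) :
    |logisticDensity x * (1 - 6 * sigmoid x + 6 * sigmoid x ^ 2)| ≤ exp (-x) := by
  have h₀ := sigmoid_pos x
  have h₁ := sigmoid_lt_one x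
  have hρ : 0 ≤ logisticDensity x := mul_nonneg h₀.le (by linarith)
  rw [abs_mul, abs_of_nonneg hρ]
  refine (mul_le_of_le_one_right hρ ?_).trans (logisticDensity_le_exp_neg x)
  rw [abs_le]; constructor <;> nlinarith

lemma abs_sigmoid_sub_sigmoid_sub_mul_logisticDensity_le {t : ℝ} (ht : 0 ≤ t) (m : ℝ) :
    |sigmoid (m + t / 2) - sigmoid (m - t / 2) - t * logisticDensity m|
      ≤ t ^ 3 / 4 * exp (-(m - t / 2)) := by
  have := abs_sub_sub_two_mul_le_of_hasDerivAt (f := logisticDensity) (m := m)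
    (by positivity : 0 ≤ t / 2) (fun x _ => hasDerivAt_sigmoid x)
    (fun x _ => hasDerivAt_logisticDensity x)
    (fun x _ => hasDerivAt_logisticDensity_mul_one_sub_two_mul_sigmoid x)
    (fun x hx => (abs_deriv_logisticDensity_le_exp_neg x).trans (exp_le_exp.2 (neg_le_neg hx.1)))
  rw [mul_div_cancel₀ t two_ne_zero] at this
  exact this.trans_eq (by ring)

lemma abs_mul_tsum_logisticDensity_sub_le {t : ℝ} (ht : 0 < t) :
    |t * ∑' n : ℕ, logisticDensity ((n + 1) * t) - (1 - sigmoid (t / 2))|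
      ≤ t ^ 3 / 4 * (1 - exp (-t))⁻¹ := by
  have hmono : Monotone fun n : ℕ => sigmoid (n * t + t / 2) :=
    fun i j hij => sigmoid_le (by gcongr)
  have hlim : Tendsto (fun n : ℕ => sigmoid (n * t + t / 2)) atTop (𝓝 1) :=
    tendsto_sigmoid_atTop.comp <|
      tendsto_atTop_add_const_right _ _ (tendsto_natCast_atTop_atTop.atTop_mul_const ht)
  have hgeom : HasSum (fun n : ℕ => t ^ 3 / 4 * exp (-t) ^ n) (t ^ 3 / 4 * (1 - exp (-t))⁻¹) :=
    (hasSum_geometric_of_lt_one (exp_pos _).le (exp_lt_one_iff.2 (neg_lt_zero.2 ht))).mul_left _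
  have := abs_tsum_sub_le_of_hasSum (hmono.hasSum_sub_of_tendsto hlim) hgeom fun n => by
    have hstep := abs_sigmoid_sub_sigmoid_sub_mul_logisticDensity_le ht.le ((n + 1) * t)
    have hexp : exp (-((n + 1) * t - t / 2)) ≤ exp (-t) ^ n := by
      rw [← exp_nat_mul]; exact exp_le_exp.2 (by nlinarith)
    rw [abs_sub_comm, Nat.cast_succ, show (n : ℝ) * t + t / 2 = (n + 1) * t - t / 2 by ring]
    exact hstep.trans (mul_le_mul_of_nonneg_left hexp (by positivity))
  rw [← tsum_mul_left]
  simpa using this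

lemma abs_tsum_logisticDensity_sub_le {t : ℝ} (ht : 0 < t) :
    |∑' n : ℕ, logisticDensity ((n + 1) * t) - (1 - sigmoid (t / 2)) / t| ≤ t * (1 + t) / 4 := by
  have hexp : t / (1 + t) ≤ 1 - exp (-t) := by
    have : exp (-t) * (1 + t) ≤ 1 := by
      rw [exp_neg, inv_mul_le_one₀ (exp_pos t)]; exact add_comm t 1 ▸ add_one_le_exp t
    rw [div_le_iff₀ (by positivity)]; nlinarith
  have hinv : (1 - exp (-t))⁻¹ ≤ (1 + t) / t := by
    rw [← inv_div]; exact inv_anti₀ (by positivity) hexp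
  rw [← mul_div_cancel_left₀ (∑' n : ℕ, logisticDensity ((n + 1) * t)) ht.ne', ← sub_div,
    abs_div, abs_of_pos ht, div_le_iff₀ ht]
  calc _ ≤ t ^ 3 / 4 * (1 - exp (-t))⁻¹ := abs_mul_tsum_logisticDensity_sub_le ht
    _ ≤ t ^ 3 / 4 * ((1 + t) / t) := by gcongr
    _ = t * (1 + t) / 4 * t := by field_simp

lemma tendsto_tsum_logisticDensity_sub :
    Tendsto (fun t => ∑' n : ℕ, logisticDensity ((n + 1) * t) - 1 / (2 * t))
      (𝓝[>] 0) (𝓝 (-1 / 8)) := by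
  have herr : Tendsto
      (fun t => ∑' n : ℕ, logisticDensity ((n + 1) * t) - (1 - sigmoid (t / 2)) / t)
      (𝓝[>] 0) (𝓝 0) := by
    refine squeeze_zero_norm' (a := fun t => t * (1 + t) / 4) ?_
      (tendsto_nhdsWithin_of_tendsto_nhds ?_)
    · filter_upwards [self_mem_nhdsWithin] with t ht using abs_tsum_logisticDensity_sub_le ht
    · exact (show Continuous fun t : ℝ => t * (1 + t) / 4 by fun_prop).tendsto' 0 0 (by norm_num)
  have hderiv : HasDerivAt (fun t => sigmoid (t / 2)) (1 / 8) 0 :=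
    ((hasDerivAt_sigmoid _).comp 0 ((hasDerivAt_id (0 : ℝ)).div_const 2)).congr_deriv
      (by norm_num)
  have hslope : Tendsto (fun t => (1 - sigmoid (t / 2)) / t - 1 / (2 * t))
      (𝓝[>] 0) (𝓝 (-1 / 8)) := by
    rw [neg_div]
    refine ((hasDerivAt_iff_tendsto_slope.1 hderiv).neg.mono_left
      (nhdsWithin_mono _ fun t ht => ne_of_gt ht)).congr' ?_
    filter_upwards [self_mem_nhdsWithin] with t ht
    rw [slope_def_field, zero_div, sigmoid_zero]
    field_simp
    ring
  simpa using herr.add hslope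

lemma tendsto_log_nhdsGT_one : Tendsto log (𝓝[>] 1) (𝓝[>] 0) :=
  tendsto_nhdsWithin_iff.2
    ⟨log_one ▸ (continuousAt_log one_ne_zero).tendsto.mono_left nhdsWithin_le_nhds,
      eventually_nhdsWithin_of_forall fun _ hb => log_pos hb⟩

theorem stmt10 :
    Filter.Tendsto
      (fun b : ℝ => (∑' j : ℕ, b ^ (j + 1) / (1 + b ^ (j + 1)) ^ 2) - 1 / (2 * Real.log b))
      (nhdsWithin 1 (Set.Ioi 1)) (nhds (-1 / 8)) := by
  refine (tendsto_tsum_logisticDensity_sub.comp tendsto_log_nhdsGT_one).congr' ?_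
  filter_upwards [self_mem_nhdsWithin] with b (hb : 1 < b)
  have hterm (j : ℕ) : logisticDensity ((j + 1) * log b) = b ^ (j + 1) / (1 + b ^ (j + 1)) ^ 2 := by
    rw [logisticDensity_eq, ← Nat.cast_succ, exp_nat_mul, exp_log (by linarith)]
  simp only [Function.comp_apply, hterm]
end

section
/- For every real number b > 1, ∑_{k=1}^∞ (−1)^k / ( k! · (b^k − 1) ) = ∑_{j=1}^∞ ( e^{−b^{−j}} − 1 ). -/
set_option maxHeartbeats 1000000


theorem stmt12 (b : ℝ) (hb : 1 < b) :
    ∑' k : ℕ, (-1 : ℝ) ^ (k + 1) / ((Nat.factorial (k + 1)) * (b ^ (k + 1) - 1))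
      = ∑' j : ℕ, (Real.exp (-(b ^ (j + 1))⁻¹) - 1) := by
  have hb0 : (0:ℝ) < b := lt_trans one_pos hb
  set r : ℝ := b⁻¹ with hr
  have hr0 : 0 < r := inv_pos.2 hb0
  have hr1 : r < 1 := inv_lt_one_of_one_lt₀ hb
  set f : ℕ → ℕ → ℝ :=
    fun k j => (-1) ^ (k + 1) * (r ^ (k + 1)) ^ (j + 1) / (Nat.factorial (k + 1)) with hf
  -- summability of the double series
  have habs : ∀ k j, |f k j| ≤ r ^ k * r ^ (j + 1) := by
    intro k j
    have hfac1 : (1:ℝ) ≤ (Nat.factorial (k + 1) : ℝ) := by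
      exact_mod_cast Nat.one_le_iff_ne_zero.2 (Nat.factorial_ne_zero _)
    have h1 : |f k j| = (r ^ (k + 1)) ^ (j + 1) / (Nat.factorial (k + 1)) := by
      rw [hf]
      rw [abs_div, abs_mul, abs_pow, abs_neg, abs_one, one_pow, one_mul,
        abs_of_nonneg (by positivity : (0:ℝ) ≤ (r ^ (k + 1)) ^ (j + 1)),
        abs_of_nonneg (by positivity : (0:ℝ) ≤ ((Nat.factorial (k + 1) : ℝ)))]
    rw [h1]
    have h2 : (r ^ (k + 1)) ^ (j + 1) ≤ r ^ k * r ^ (j + 1) := by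
      rw [← pow_mul, ← pow_add]
      exact pow_le_pow_of_le_one hr0.le hr1.le (by nlinarith)
    calc (r ^ (k + 1)) ^ (j + 1) / (Nat.factorial (k + 1))
        ≤ (r ^ (k + 1)) ^ (j + 1) / 1 :=
          div_le_div_of_nonneg_left (by positivity) one_pos hfac1
      _ = (r ^ (k + 1)) ^ (j + 1) := div_one _
      _ ≤ r ^ k * r ^ (j + 1) := h2
  have h1 : Summable (fun k : ℕ => r ^ k) := summable_geometric_of_lt_one hr0.le hr1
  have h2 : Summable (fun j : ℕ => r ^ (j + 1)) := (summable_nat_add_iff 1).2 h1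
  have hsumg : Summable (fun p : ℕ × ℕ => r ^ p.1 * r ^ (p.2 + 1)) :=
    h1.mul_of_nonneg h2 (fun k => by positivity) (fun j => by positivity)
  have hsum : Summable (Function.uncurry f) :=
    Summable.of_abs <|
      Summable.of_nonneg_of_le (fun p => abs_nonneg _) (fun p => habs p.1 p.2) hsumg
  -- rows give the LHS
  have hrow : ∀ k : ℕ, ∑' j, f k j
      = (-1 : ℝ) ^ (k + 1) / ((Nat.factorial (k + 1)) * (b ^ (k + 1) - 1)) := by
    intro k
    set s : ℝ := r ^ (k + 1) with hs
    have hs0 : 0 < s := by positivity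
    have hs1 : s < 1 := pow_lt_one₀ hr0.le hr1 (Nat.succ_ne_zero k)
    have hgeo : ∑' j : ℕ, s ^ (j + 1) = s * (1 - s)⁻¹ := by
      have : ∑' j : ℕ, s ^ (j + 1) = s * ∑' j : ℕ, s ^ j := by
        rw [← tsum_mul_left]
        exact tsum_congr fun j => pow_succ' s j
      rw [this, tsum_geometric_of_lt_one hs0.le hs1]
    have hfac : f k = fun j => ((-1 : ℝ) ^ (k + 1) / (Nat.factorial (k + 1))) * s ^ (j + 1) := by
      funext j; rw [hf]; ring
    rw [hfac, tsum_mul_left, hgeo]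
    have hbk : (1:ℝ) < b ^ (k + 1) := one_lt_pow₀ hb (Nat.succ_ne_zero k)
    have hsb : s = (b ^ (k + 1))⁻¹ := by rw [hs, hr, inv_pow]
    have hne : b ^ (k + 1) - 1 ≠ 0 := by linarith
    have hbne : b ^ (k + 1) ≠ 0 := by positivity
    rw [hsb]
    field_simp
  -- columns give the RHS
  have hcol : ∀ j : ℕ, ∑' k, f k j = Real.exp (-(b ^ (j + 1))⁻¹) - 1 := by
    intro j
    set x : ℝ := r ^ (j + 1) with hx
    have hxb : -(b ^ (j + 1))⁻¹ = -x := by rw [hx, hr, inv_pow]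
    have hfx : (fun k => f k j) = fun k => (-x) ^ (k + 1) / (Nat.factorial (k + 1)) := by
      funext k
      show (-1:ℝ) ^ (k + 1) * (r ^ (k + 1)) ^ (j + 1) / ((Nat.factorial (k + 1)) : ℝ)
        = (-x) ^ (k + 1) / (Nat.factorial (k + 1))
      have : (r ^ (k + 1)) ^ (j + 1) = x ^ (k + 1) := by rw [hx, ← pow_mul, ← pow_mul, mul_comm]
      rw [this, show (-x : ℝ) = (-1) * x by ring, mul_pow]
    have hexp : Real.exp (-x) = ∑' n : ℕ, (-x) ^ n / (Nat.factorial n) := by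
      rw [Real.exp_eq_exp_ℝ, NormedSpace.exp_eq_tsum_div]
    have hsx : Summable (fun n : ℕ => (-x) ^ n / (Nat.factorial n)) :=
      Real.summable_pow_div_factorial (-x)
    have hz := Summable.tsum_eq_zero_add hsx
    rw [hxb, hfx, hexp]
    rw [hz]
    simp
  calc ∑' k : ℕ, (-1 : ℝ) ^ (k + 1) / ((Nat.factorial (k + 1)) * (b ^ (k + 1) - 1))
      = ∑' k : ℕ, ∑' j : ℕ, f k j := by exact tsum_congr fun k => (hrow k).symm
    _ = ∑' j : ℕ, ∑' k : ℕ, f k j := (Summable.tsum_comm hsum).symm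
    _ = ∑' j : ℕ, (Real.exp (-(b ^ (j + 1))⁻¹) - 1) := tsum_congr fun j => hcol j
end

section
/- For every real number b > 0, the limit as the natural number n tends to infinity of ( ∑_{j=1}^∞ e^{−b·j^{1/n}} − b^{−n}·n! ) equals −1/(2·e^{b}). -/
/-!
With `f x = exp (-b * x ^ (1/n))`, the integral `∫₀^∞ f` is the Gamma integral `n! / b ^ n`, so the
quantity is `∑_{j ≥ 1} f j - ∫₁^∞ f - ∫₀¹ f`. On `[1, ∞)` the function `f` is convex and decreasing,
and the trapezoid rule with its convexity error bound gives
`f 1 / 2 ≤ ∑_{j ≥ 1} f j - ∫₁^∞ f ≤ (f 1 - f' 1) / 2`, where `f 1 = e^{-b}` and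
`f' 1 = -(b / n) e^{-b} → 0`. Finally `∫₀¹ f → e^{-b}` by dominated convergence, since
`x ^ (1/n) → 1` for `x > 0`.
-/

open Real Set Filter Topology MeasureTheory

lemma intervalIntegral_const_add_mul_sub (c d x₀ a b : ℝ) :
    ∫ x in a..b, (c + d * (x - x₀)) = (b - a) * c + d * ((b - x₀) ^ 2 - (a - x₀) ^ 2) / 2 := by
  rw [intervalIntegral.integral_add intervalIntegrable_const
      ((by fun_prop : Continuous fun x : ℝ => d * (x - x₀)).intervalIntegrable _ _),
    intervalIntegral.integral_const_mul, intervalIntegral.integral_comp_sub_right (fun x => x)]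
  simp only [intervalIntegral.integral_const, integral_id, smul_eq_mul]
  ring

namespace ConvexOn

variable {f : ℝ → ℝ} {a b : ℝ}

lemma intervalIntegral_le_trapezoid (hab : a < b) (hf : ConvexOn ℝ (Icc a b) f)
    (hcont : ContinuousOn f (Icc a b)) :
    ∫ x in a..b, f x ≤ (b - a) * (f a + f b) / 2 := by
  have hchord : ∀ x ∈ Icc a b, f x ≤ f a + (f b - f a) / (b - a) * (x - a) := by
    rintro x ⟨hax, hxb⟩
    rcases hax.eq_or_lt with rfl | hax
    · simp
    have := hf.secant_mono (left_mem_Icc.2 hab.le) ⟨hax.le, hxb⟩ (right_mem_Icc.2 hab.le)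
      hax.ne' hab.ne' hxb
    rw [div_le_iff₀ (sub_pos.2 hax)] at this
    linarith
  calc ∫ x in a..b, f x
      ≤ ∫ x in a..b, (f a + (f b - f a) / (b - a) * (x - a)) :=
        intervalIntegral.integral_mono_on hab.le (hcont.intervalIntegrable_of_Icc hab.le)
          ((by fun_prop : Continuous fun x : ℝ => _).intervalIntegrable _ _) hchord
    _ = (b - a) * (f a + f b) / 2 := by
        rw [intervalIntegral_const_add_mul_sub]
        field_simp [(sub_pos.2 hab).ne']
        ring

lemma trapezoid_le_intervalIntegral_add (hab : a < b) (hf : ConvexOn ℝ (Icc a b) f)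
    (hcont : ContinuousOn f (Icc a b)) (hfa : DifferentiableAt ℝ f a)
    (hfb : DifferentiableAt ℝ f b) :
    (b - a) * (f a + f b) / 2 ≤ (∫ x in a..b, f x) + (b - a) ^ 2 * (deriv f b - deriv f a) / 2 := by
  have ha := left_mem_Icc.2 hab.le
  have hb := right_mem_Icc.2 hab.le
  have htangent_b : ∀ x ∈ Icc a b, f b + deriv f b * (x - b) ≤ f x := by
    rintro x ⟨hax, hxb⟩
    rcases hxb.eq_or_lt with rfl | hxb
    · simp
    have := hf.slope_le_deriv ⟨hax, hxb.le⟩ hb hxb hfb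
    rw [slope_def_field, div_le_iff₀ (sub_pos.2 hxb)] at this
    linarith
  have htangent_a : f a + deriv f a * (b - a) ≤ f b := by
    have := hf.deriv_le_slope ha hb hab hfa
    rw [slope_def_field, le_div_iff₀ (sub_pos.2 hab)] at this
    linarith
  have hint : (b - a) * f b - deriv f b * (b - a) ^ 2 / 2 ≤ ∫ x in a..b, f x := by
    calc (b - a) * f b - deriv f b * (b - a) ^ 2 / 2
        = ∫ x in a..b, (f b + deriv f b * (x - b)) := by
          rw [intervalIntegral_const_add_mul_sub]; ring
      _ ≤ ∫ x in a..b, f x :=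
          intervalIntegral.integral_mono_on hab.le
            ((by fun_prop : Continuous fun x : ℝ => _).intervalIntegrable _ _)
            (hcont.intervalIntegrable_of_Icc hab.le) htangent_b
  linarith [mul_le_mul_of_nonneg_left htangent_a (sub_pos.2 hab).le]

theorem tsum_sub_integral_Ioi_bounds (hf : ConvexOn ℝ (Ici a) f)
    (hdiff : ∀ x ∈ Ici a, DifferentiableAt ℝ f x) (hderiv : ∀ x ∈ Ici a, deriv f x ≤ 0)
    (hnonneg : ∀ x ∈ Ici a, 0 ≤ f x) (hint : IntegrableOn f (Ioi a)) :
    f a / 2 ≤ ∑' j : ℕ, f (a + j) - ∫ x in Ioi a, f x ∧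
      ∑' j : ℕ, f (a + j) - ∫ x in Ioi a, f x ≤ (f a - deriv f a) / 2 := by
  set u : ℕ → ℝ := fun j => f (a + j)
  set I : ℕ → ℝ := fun j => ∫ x in (a + j)..(a + (j + 1 : ℕ)), f x
  set ε : ℕ → ℝ := fun j => (u j + u (j + 1)) / 2 - I j
  have hmem : ∀ j : ℕ, a + j ∈ Ici a := fun j => by simp
  have hcont : ContinuousOn f (Ici a) := fun x hx => (hdiff x hx).continuousAt.continuousWithinAt
  have hI : HasSum I (∫ x in Ioi a, f x) := by
    rw [hasSum_iff_tendsto_nat_of_nonneg fun j => intervalIntegral.integral_nonneg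
      (by push_cast; linarith) fun x hx => hnonneg x ((hmem j).trans hx.1)]
    refine (intervalIntegral_tendsto_integral_Ioi a hint
      (tendsto_atTop_add_const_left _ a tendsto_natCast_atTop_atTop)).congr fun N => ?_
    rw [intervalIntegral.sum_integral_adjacent_intervals (a := fun k : ℕ => a + k) fun k _ =>
      (hcont.mono fun x hx => (le_min (hmem k) (hmem (k + 1))).trans hx.1).intervalIntegrable]
    simp
  have hε : ∀ j, 0 ≤ ε j ∧ ε j ≤ (deriv f (a + (j + 1 : ℕ)) - deriv f (a + j)) / 2 := by
    intro j
    have hsub : Icc (a + j) (a + (j + 1 : ℕ)) ⊆ Ici a := fun x hx => (hmem j).trans hx.1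
    have hlt : a + j < a + (j + 1 : ℕ) := by push_cast; linarith
    have hconv := hf.subset hsub (convex_Icc _ _)
    have h1 := hconv.intervalIntegral_le_trapezoid hlt (hcont.mono hsub)
    have h2 := hconv.trapezoid_le_intervalIntegral_add hlt (hcont.mono hsub) (hdiff _ (hmem j))
      (hdiff _ (hmem (j + 1)))
    have hlen : a + (j + 1 : ℕ) - (a + j) = 1 := by push_cast; ring
    rw [hlen] at h1 h2
    constructor <;> simp only [ε, u, I] <;> linarith
  have hpartial : ∀ N, ∑ j ∈ Finset.range N, ε j ≤ -deriv f a / 2 := fun N => calc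
    ∑ j ∈ Finset.range N, ε j
        ≤ ∑ j ∈ Finset.range N, (deriv f (a + (j + 1 : ℕ)) - deriv f (a + j)) / 2 :=
          Finset.sum_le_sum fun j _ => (hε j).2
    _ = (deriv f (a + N) - deriv f a) / 2 := by
          rw [← Finset.sum_div, Finset.sum_range_sub (fun j : ℕ => deriv f (a + j))]
          simp
    _ ≤ -deriv f a / 2 := by linarith [hderiv _ (hmem N)]
  have hε_summable : Summable ε := summable_of_sum_range_le (fun j => (hε j).1) hpartial
  have hu : Summable u := by
    refine Summable.of_nonneg_of_le (fun j => hnonneg _ (hmem j)) (fun j => ?_)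
      ((hε_summable.add hI.summable).mul_left 2)
    have := hnonneg _ (hmem (j + 1))
    simp only [ε, u] at this ⊢
    linarith
  have hε_tsum : ∑' j, ε j = ∑' j, u j - (∫ x in Ioi a, f x) - f a / 2 := by
    have hshift := (hasSum_nat_add_iff' 1).2 hu.hasSum
    refine (((hu.hasSum.add hshift).div_const 2).sub hI).tsum_eq.trans ?_
    simp [u]
    ring
  have hε_nonneg : 0 ≤ ∑' j, ε j := tsum_nonneg fun j => (hε j).1
  have hε_le : ∑' j, ε j ≤ -deriv f a / 2 :=
    Real.tsum_le_of_sum_range_le (fun j => (hε j).1) hpartial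
  constructor <;> linarith

end ConvexOn

section ExpNegMulRpow

variable {b p : ℝ}

lemma convexOn_exp_neg_mul_rpow (hb : 0 ≤ b) (hp₀ : 0 ≤ p) (hp₁ : p ≤ 1) :
    ConvexOn ℝ (Ici 0) fun x : ℝ => exp (-b * x ^ p) := by
  have hinner : ConvexOn ℝ (Ici 0) fun x : ℝ => -b * x ^ p := by
    simpa [neg_mul, smul_eq_mul] using ((concaveOn_rpow hp₀ hp₁).neg.smul hb)
  have himage : Convex ℝ ((fun x : ℝ => -b * x ^ p) '' Ici 0) :=
    convex_iff_isPreconnected.2 <| (convex_Ici 0).isPreconnected.image _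
      ((continuous_rpow_const hp₀).const_mul _).continuousOn
  exact (convexOn_exp.subset (subset_univ _) himage).comp hinner (exp_monotone.monotoneOn _)

lemma integrableOn_exp_neg_mul_rpow (hb : 0 < b) (hp : 0 < p) :
    IntegrableOn (fun x : ℝ => exp (-b * x ^ p)) (Ioi 0) := by
  simpa using integrableOn_rpow_mul_exp_neg_mul_rpow neg_one_lt_zero hp hb

lemma hasDerivAt_exp_neg_mul_rpow {x : ℝ} (hx : 0 < x) :
    HasDerivAt (fun x : ℝ => exp (-b * x ^ p)) (-(b * p * x ^ (p - 1) * exp (-b * x ^ p))) x := by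
  convert ((hasDerivAt_rpow_const (p := p) (Or.inl hx.ne')).const_mul (-b)).exp using 1
  ring

lemma tsum_exp_neg_mul_rpow_sub_integral_Ioi_one_bounds (hb : 0 < b) (hp₀ : 0 < p) (hp₁ : p ≤ 1) :
    exp (-b) / 2 ≤ ∑' j : ℕ, exp (-b * ((j : ℝ) + 1) ^ p) - ∫ x in Ioi 1, exp (-b * x ^ p) ∧
      ∑' j : ℕ, exp (-b * ((j : ℝ) + 1) ^ p) - ∫ x in Ioi 1, exp (-b * x ^ p)
        ≤ (1 + b * p) * exp (-b) / 2 := by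
  have hpos : Ici (1 : ℝ) ⊆ Ioi 0 := fun x hx => mem_Ioi.2 (zero_lt_one.trans_le hx)
  have hderiv : ∀ x ∈ Ici (1 : ℝ), deriv (fun x : ℝ => exp (-b * x ^ p)) x
      = -(b * p * x ^ (p - 1) * exp (-b * x ^ p)) := fun x hx =>
    (hasDerivAt_exp_neg_mul_rpow (hpos hx)).deriv
  have h := ConvexOn.tsum_sub_integral_Ioi_bounds
    ((convexOn_exp_neg_mul_rpow hb.le hp₀.le hp₁).subset (Ici_subset_Ici.2 zero_le_one)
      (convex_Ici _))
    (fun x hx => (hasDerivAt_exp_neg_mul_rpow (hpos hx)).differentiableAt)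
    (fun x hx => by
      rw [hderiv x hx, neg_nonpos]
      have : 0 ≤ x ^ (p - 1) := rpow_nonneg (zero_le_one.trans hx) _
      positivity)
    (fun x _ => (exp_pos _).le)
    ((integrableOn_exp_neg_mul_rpow hb hp₀).mono_set (Ioi_subset_Ioi zero_le_one))
  rw [hderiv 1 self_mem_Ici] at h
  simp only [one_rpow, mul_one, add_comm (1 : ℝ)] at h
  constructor <;> linarith [h.1, h.2]

lemma integral_exp_neg_mul_rpow_inv_natCast (hb : 0 < b) {n : ℕ} (hn : n ≠ 0) :
    ∫ x in Ioi 0, exp (-b * x ^ (n : ℝ)⁻¹) = (b ^ n)⁻¹ * n.factorial := by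
  rw [integral_exp_neg_mul_rpow (by positivity) hb, ← Gamma_nat_eq_factorial,
    show -1 / (n : ℝ)⁻¹ = -n by field_simp, show 1 / (n : ℝ)⁻¹ = n by field_simp,
    rpow_neg hb.le, rpow_natCast]

lemma tendsto_setIntegral_Ioc_exp_neg_mul_rpow (hb : 0 ≤ b) :
    Tendsto (fun p : ℝ => ∫ x in Ioc 0 1, exp (-b * x ^ p)) (𝓝 0) (𝓝 (exp (-b))) := by
  have hcont : ContinuousAt (fun p : ℝ => ∫ x in Ioc 0 1, exp (-b * x ^ p)) 0 := by
    refine continuousAt_of_dominated (bound := fun _ => 1) ?_ ?_ ?_ ?_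
    · exact Eventually.of_forall fun p => by fun_prop
    · refine Eventually.of_forall fun p => (ae_restrict_iff' measurableSet_Ioc).2 ?_
      refine ae_of_all _ fun x hx => ?_
      rw [norm_of_nonneg (exp_pos _).le, exp_le_one_iff, neg_mul, neg_nonpos]
      exact mul_nonneg hb (rpow_nonneg hx.1.le _)
    · exact integrableOn_const measure_Ioc_lt_top.ne
    · refine (ae_restrict_iff' measurableSet_Ioc).2 (ae_of_all _ fun x hx => ?_)
      exact (continuousAt_const_rpow hx.1.ne').const_mul _ |>.rexp
  simpa using hcont.tendsto

end ExpNegMulRpow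

theorem stmt16 (b : ℝ) (hb : 0 < b) :
    Filter.Tendsto
      (fun n : ℕ =>
        (∑' j : ℕ, Real.exp (-b * ((j : ℝ) + 1) ^ ((n : ℝ)⁻¹))) - (b ^ n)⁻¹ * Nat.factorial n)
      Filter.atTop (nhds (-1 / (2 * Real.exp b))) := by
  set I : ℕ → ℝ := fun n => ∫ x in Ioc 0 1, exp (-b * x ^ (n : ℝ)⁻¹)
  have hsplit : ∀ n : ℕ, n ≠ 0 → (b ^ n)⁻¹ * n.factorial
      = I n + ∫ x in Ioi 1, exp (-b * x ^ (n : ℝ)⁻¹) := fun n hn => by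
    have hint := integrableOn_exp_neg_mul_rpow hb (p := (n : ℝ)⁻¹) (by positivity)
    rw [← integral_exp_neg_mul_rpow_inv_natCast hb hn, ← Ioc_union_Ioi_eq_Ioi zero_le_one,
      setIntegral_union Ioc_disjoint_Ioi_same measurableSet_Ioi
        (hint.mono_set Ioc_subset_Ioi_self) (hint.mono_set (Ioi_subset_Ioi zero_le_one))]
  have hI : Tendsto I atTop (𝓝 (exp (-b))) :=
    (tendsto_setIntegral_Ioc_exp_neg_mul_rpow hb.le).comp tendsto_inv_atTop_nhds_zero_nat
  have hlimit : -1 / (2 * exp b) = exp (-b) / 2 - exp (-b) := by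
    rw [exp_neg]; field_simp; ring
  refine tendsto_of_tendsto_of_tendsto_of_le_of_le' (g := fun n => exp (-b) / 2 - I n)
    (h := fun n => (1 + b * (n : ℝ)⁻¹) * exp (-b) / 2 - I n) ?_ ?_ ?_ ?_
  · rw [hlimit]
    exact tendsto_const_nhds.sub hI
  · rw [hlimit]
    simpa using ((((tendsto_inv_atTop_nhds_zero_nat (𝕜 := ℝ)).const_mul b).const_add 1).mul_const
      (exp (-b))).div_const 2 |>.sub hI
  all_goals
    filter_upwards [eventually_ne_atTop 0] with n hn
    have := tsum_exp_neg_mul_rpow_sub_integral_Ioi_one_bounds hb (p := (n : ℝ)⁻¹) (by positivity)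
      (inv_le_one_of_one_le₀ (Nat.one_le_cast.2 (Nat.one_le_iff_ne_zero.2 hn)))
    rw [hsplit n hn]
    linarith [this.1, this.2]
end

section
/- Let s and c be real numbers with s < 0, c > 1, and c > −1/s. Then (1/(2π)) · ∫_ℝ ζ(−s·(c + i v)) · Γ(c + i v) · ζ(c + i v) dv = ∑_{j=1}^∞ 1/( e^{j^{−s}} − 1 ). -/
/-!
Expanding `1 / (e^x - 1) = ∑_{n ≥ 1} e^{-n x}` turns `f(t) = ∑_j 1 / (exp ((j + 1)^a t) - 1)`,
with `a = -s`, into `∑_{j,n} exp (-(n + 1) (j + 1)^a t)`. Term by term, its Mellin transform at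
`w` is `Γ(w) ∑_{j,n} ((n + 1) (j + 1)^a)^{-w} = ζ(a w) Γ(w) ζ(w)`. On the line `Re w = c` both zeta
factors are bounded and `|Γ(c + iv)| ≤ Γ(c + 2) / (1 + v²)`, so Mellin inversion applies, and at
`t = 1` it gives the identity.
-/

open MeasureTheory Set Filter

section MellinOfExpSeries

variable {ι : Type*} [Countable ι] {p : ι → ℝ} {F : ℝ → ℝ}

theorem hasSum_mellin_of_hasSum_exp {s : ℂ} (hp : ∀ i, 0 < p i) (hs : 0 < s.re)
    (hF : ∀ t ∈ Ioi 0, HasSum (fun i ↦ Real.exp (-p i * t)) (F t))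
    (h_sum : Summable fun i ↦ 1 / p i ^ s.re) :
    HasSum (fun i ↦ Complex.Gamma s / (p i : ℂ) ^ s) (mellin (fun t ↦ (F t : ℂ)) s) := by
  simpa using hasSum_mellin (a := fun _ ↦ 1) (fun i ↦ Or.inr (hp i)) hs
    (fun t ht ↦ by simpa using Complex.hasSum_ofReal.mpr (hF t ht)) (by simpa using h_sum)

theorem mellinConvergent_of_hasSum_exp [Nonempty ι] {σ : ℝ} (hp : ∀ i, 0 < p i) (hσ : 0 < σ)
    (hF : ∀ t ∈ Ioi 0, HasSum (fun i ↦ Real.exp (-p i * t)) (F t))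
    (h_sum : Summable fun i ↦ 1 / p i ^ σ) :
    MellinConvergent (fun t ↦ (F t : ℂ)) σ := by
  have hmellin := hasSum_mellin_of_hasSum_exp (s := σ) hp (by simpa) hF (by simpa using h_sum)
  have hterm : ∀ i, Complex.Gamma σ / (p i : ℂ) ^ (σ : ℂ) = ((Real.Gamma σ / p i ^ σ : ℝ) : ℂ) :=
    fun i ↦ by rw [Complex.ofReal_div, Complex.Gamma_ofReal, Complex.ofReal_cpow (hp i).le]
  simp only [hterm] at hmellin
  have hreal := Complex.summable_ofReal.mp hmellin.summable
  have hpos : 0 < ∑' i, Real.Gamma σ / p i ^ σ :=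
    hreal.tsum_pos (fun i ↦ by have := hp i; positivity) (Classical.arbitrary ι)
      (by have := hp (Classical.arbitrary ι); positivity)
  -- a non-integrable function has Bochner integral `0`
  refine Integrable.of_integral_ne_zero (μ := volume.restrict (Ioi 0)) ?_
  rw [← mellin, ← (Complex.hasSum_ofReal.mpr hreal.hasSum).unique hmellin]
  exact Complex.ofReal_ne_zero.mpr hpos.ne'

end MellinOfExpSeries

theorem exp_sub_one_pos {x : ℝ} (hx : 0 < x) : 0 < Real.exp x - 1 :=
  sub_pos.mpr (Real.one_lt_exp_iff.mpr hx)

open Nat in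
theorem one_div_exp_sub_one_le_factorial_div_pow {x : ℝ} (hx : 0 < x) {k : ℕ} (hk : k ≠ 0) :
    1 / (Real.exp x - 1) ≤ k ! / x ^ k := by
  have hexp : 1 + x ^ k / k ! ≤ Real.exp x := by
    have h := Real.sum_le_exp_of_nonneg hx.le (k + 1)
    rw [Finset.sum_range_succ, Finset.sum_range_eq_add_Ico _ (Nat.pos_of_ne_zero hk)] at h
    have : 0 ≤ ∑ i ∈ Finset.Ico 1 k, x ^ i / i ! :=
      Finset.sum_nonneg fun i _ ↦ by positivity
    simp only [pow_zero, factorial_zero, cast_one, div_one] at h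
    linarith
  calc 1 / (Real.exp x - 1) ≤ 1 / (x ^ k / k !) :=
        one_div_le_one_div_of_le (div_pos (pow_pos hx k) (cast_pos.mpr k.factorial_pos))
          (by linarith)
    _ = k ! / x ^ k := one_div_div _ _

theorem hasSum_exp_neg_nat_succ_mul {x : ℝ} (hx : 0 < x) :
    HasSum (fun n : ℕ ↦ Real.exp (-(((n : ℝ) + 1) * x))) (1 / (Real.exp x - 1)) := by
  have hr : Real.exp (-x) < 1 := Real.exp_lt_one_iff.mpr (neg_lt_zero.mpr hx)
  have h := (hasSum_geometric_of_lt_one (Real.exp_pos _).le hr).mul_left (Real.exp (-x))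
  have hsum : Real.exp (-x) * (1 - Real.exp (-x))⁻¹ = 1 / (Real.exp x - 1) := by
    have := (exp_sub_one_pos hx).ne'
    rw [Real.exp_neg]
    field_simp
  rw [← hsum]
  refine h.congr_fun fun n ↦ ?_
  rw [← Real.exp_nat_mul, ← Real.exp_add]
  ring_nf

theorem summable_one_div_nat_add_one_rpow {σ : ℝ} (hσ : 1 < σ) :
    Summable fun n : ℕ ↦ 1 / ((n : ℝ) + 1) ^ σ := by
  refine ((Real.summable_one_div_nat_add_rpow 1 σ).mpr hσ).congr fun n ↦ ?_
  rw [abs_of_pos (Nat.cast_add_one_pos n)]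

theorem norm_one_div_nat_add_one_cpow (n : ℕ) (z : ℂ) :
    ‖1 / ((n : ℂ) + 1) ^ z‖ = 1 / ((n : ℝ) + 1) ^ z.re := by
  rw [norm_div, norm_one, ← Nat.cast_succ, Complex.norm_natCast_cpow_of_pos n.succ_pos,
    Nat.cast_succ]

theorem summable_norm_one_div_nat_add_one_cpow {z : ℂ} (hz : 1 < z.re) :
    Summable fun n : ℕ ↦ ‖1 / ((n : ℂ) + 1) ^ z‖ := by
  simpa only [norm_one_div_nat_add_one_cpow] using summable_one_div_nat_add_one_rpow hz

theorem hasSum_one_div_nat_add_one_cpow {z : ℂ} (hz : 1 < z.re) :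
    HasSum (fun n : ℕ ↦ 1 / ((n : ℂ) + 1) ^ z) (riemannZeta z) := by
  rw [zeta_eq_tsum_one_div_nat_add_one_cpow hz]
  exact (summable_norm_one_div_nat_add_one_cpow hz).of_norm.hasSum

theorem norm_riemannZeta_le {z : ℂ} (hz : 1 < z.re) :
    ‖riemannZeta z‖ ≤ ∑' n : ℕ, 1 / ((n : ℝ) + 1) ^ z.re := by
  rw [zeta_eq_tsum_one_div_nat_add_one_cpow hz]
  simpa only [norm_one_div_nat_add_one_cpow] using
    norm_tsum_le_tsum_norm (summable_norm_one_div_nat_add_one_cpow hz)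

theorem continuousAt_riemannZeta_of_one_lt_re {z : ℂ} (hz : 1 < z.re) :
    ContinuousAt riemannZeta z :=
  (differentiableAt_riemannZeta fun h ↦ by simp [h] at hz).continuousAt

theorem continuousAt_Gamma_of_re_pos {z : ℂ} (hz : 0 < z.re) : ContinuousAt Complex.Gamma z := by
  refine (Complex.differentiableAt_Gamma z fun m h ↦ ?_).continuousAt
  have : z.re = -m := by simp [h]
  linarith [(Nat.cast_nonneg m : (0 : ℝ) ≤ m)]

theorem norm_Gamma_le_Gamma_re {z : ℂ} (hz : 0 < z.re) :
    ‖Complex.Gamma z‖ ≤ Real.Gamma z.re := by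
  rw [Complex.Gamma_eq_integral hz, Real.Gamma_eq_integral hz, Complex.GammaIntegral]
  refine (norm_integral_le_integral_norm _).trans_eq
    (setIntegral_congr_fun measurableSet_Ioi fun x hx ↦ ?_)
  rw [norm_mul, Complex.norm_real, Real.norm_of_nonneg (Real.exp_pos _).le,
    Complex.norm_cpow_eq_rpow_re_of_pos hx]
  simp

theorem norm_Gamma_le_div_one_add_sq {σ : ℝ} (hσ : 1 ≤ σ) (v : ℝ) :
    ‖Complex.Gamma (σ + v * Complex.I)‖ ≤ Real.Gamma (σ + 2) / (1 + v ^ 2) := by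
  set w : ℂ := σ + v * Complex.I
  have hsq : ∀ τ : ℝ, 1 ≤ τ → 1 + v ^ 2 ≤ ‖(τ : ℂ) + v * Complex.I‖ ^ 2 := fun τ hτ ↦ by
    rw [Complex.sq_norm, Complex.normSq_add_mul_I]
    nlinarith
  have hw : 1 + v ^ 2 ≤ ‖w‖ ^ 2 := hsq σ hσ
  have hw1 : 1 + v ^ 2 ≤ ‖w + 1‖ ^ 2 := by
    have : w + 1 = ((σ + 1 : ℝ) : ℂ) + v * Complex.I := by push_cast; ring
    rw [this]
    exact hsq _ (by linarith)
  have hne : ∀ z : ℂ, 1 + v ^ 2 ≤ ‖z‖ ^ 2 → z ≠ 0 := fun z hz h0 ↦ by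
    rw [h0, norm_zero] at hz
    nlinarith
  have hGamma : Complex.Gamma w = Complex.Gamma (w + 2) / (w * (w + 1)) := by
    rw [show w + 2 = w + 1 + 1 by ring, Complex.Gamma_add_one _ (hne _ hw1),
      Complex.Gamma_add_one _ (hne _ hw)]
    field_simp [hne _ hw, hne _ hw1]
  have hnum : ‖Complex.Gamma (w + 2)‖ ≤ Real.Gamma (σ + 2) := by
    have hre : (w + 2).re = σ + 2 := by simp [w]
    simpa [hre] using norm_Gamma_le_Gamma_re (z := w + 2) (by rw [hre]; linarith)
  have hden : 1 + v ^ 2 ≤ ‖w‖ * ‖w + 1‖ := by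
    rw [← pow_le_pow_iff_left₀ (by positivity) (by positivity) two_ne_zero, mul_pow]
    nlinarith
  rw [hGamma, norm_div, norm_mul]
  exact div_le_div₀ (Real.Gamma_pos_of_pos (by linarith)).le hnum (by positivity) hden

theorem integrable_riemannZeta_mul_Gamma_mul_riemannZeta {a c : ℝ} (hc : 1 < c)
    (hac : 1 < a * c) :
    Integrable fun v : ℝ ↦ riemannZeta (a * (c + v * Complex.I)) *
      Complex.Gamma (c + v * Complex.I) * riemannZeta (c + v * Complex.I) := by
  have hre : ∀ v : ℝ, ((c : ℂ) + v * Complex.I).re = c := fun v ↦ by simp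
  have hare : ∀ v : ℝ, ((a : ℂ) * (c + v * Complex.I)).re = a * c := fun v ↦ by
    rw [Complex.re_ofReal_mul, hre]
  have hcont : Continuous fun v : ℝ ↦ riemannZeta (a * (c + v * Complex.I)) *
      Complex.Gamma (c + v * Complex.I) * riemannZeta (c + v * Complex.I) := by
    refine continuous_iff_continuousAt.mpr fun v ↦ ContinuousAt.mul (.mul ?_ ?_) ?_
    · exact (continuousAt_riemannZeta_of_one_lt_re (by rwa [hare])).comp (by fun_prop)
    · exact (continuousAt_Gamma_of_re_pos (by rw [hre]; linarith)).comp (by fun_prop)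
    · exact (continuousAt_riemannZeta_of_one_lt_re (by rwa [hre])).comp (by fun_prop)
  set Za := ∑' n : ℕ, 1 / ((n : ℝ) + 1) ^ (a * c)
  set Z := ∑' n : ℕ, 1 / ((n : ℝ) + 1) ^ c
  refine (integrable_inv_one_add_sq.const_mul (Za * Real.Gamma (c + 2) * Z)).mono'
    hcont.aestronglyMeasurable (ae_of_all _ fun v ↦ ?_)
  have hζa := norm_riemannZeta_le (z := a * (c + v * Complex.I)) (by rwa [hare])
  have hζ := norm_riemannZeta_le (z := c + v * Complex.I) (by rwa [hre])
  rw [hare] at hζa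
  rw [hre] at hζ
  calc ‖riemannZeta (a * (c + v * Complex.I)) * Complex.Gamma (c + v * Complex.I) *
        riemannZeta (c + v * Complex.I)‖
      ≤ Za * (Real.Gamma (c + 2) / (1 + v ^ 2)) * Z := by
        rw [norm_mul, norm_mul]
        gcongr
        exact norm_Gamma_le_div_one_add_sq hc.le v
    _ = Za * Real.Gamma (c + 2) * Z * (1 + v ^ 2)⁻¹ := by ring

section BoseSum

variable {a : ℝ}

noncomputable def energy (a : ℝ) (i : ℕ × ℕ) : ℝ := ((i.2 : ℝ) + 1) * ((i.1 : ℝ) + 1) ^ a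

noncomputable def boseSum (a t : ℝ) : ℝ := ∑' j : ℕ, 1 / (Real.exp (((j : ℝ) + 1) ^ a * t) - 1)

theorem energy_pos (a : ℝ) (i : ℕ × ℕ) : 0 < energy a i := by
  unfold energy
  positivity

theorem summable_one_div_exp_rpow_mul_sub_one (ha : 0 < a) {t : ℝ} (ht : 0 < t) :
    Summable fun j : ℕ ↦ 1 / (Real.exp (((j : ℝ) + 1) ^ a * t) - 1) := by
  obtain ⟨k, hk⟩ := exists_nat_gt (1 / a)
  have hk0 : k ≠ 0 := by rintro rfl; exact (one_div_pos.mpr ha).not_gt (by simpa using hk)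
  have hak : 1 < a * k := by rwa [div_lt_iff₀ ha, mul_comm] at hk
  refine Summable.of_nonneg_of_le
    (fun j ↦ (one_div_pos.mpr (exp_sub_one_pos (by positivity))).le) (fun j ↦ ?_)
    ((summable_one_div_nat_add_one_rpow hak).mul_left (k.factorial / t ^ k))
  have hj : (0 : ℝ) < (j : ℝ) + 1 := Nat.cast_add_one_pos j
  calc 1 / (Real.exp (((j : ℝ) + 1) ^ a * t) - 1)
      ≤ k.factorial / (((j : ℝ) + 1) ^ a * t) ^ k :=
        one_div_exp_sub_one_le_factorial_div_pow (by positivity) hk0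
    _ = k.factorial / t ^ k * (1 / ((j : ℝ) + 1) ^ (a * k)) := by
        rw [Real.rpow_mul_natCast hj.le, mul_pow]
        field_simp

theorem hasSum_exp_neg_energy (ha : 0 < a) {t : ℝ} (ht : 0 < t) :
    HasSum (fun i ↦ Real.exp (-energy a i * t)) (boseSum a t) := by
  have hfiber : ∀ j : ℕ, HasSum (fun n ↦ Real.exp (-energy a (j, n) * t))
      (1 / (Real.exp (((j : ℝ) + 1) ^ a * t) - 1)) := fun j ↦ by
    refine (hasSum_exp_neg_nat_succ_mul (by positivity)).congr_fun fun n ↦ ?_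
    simp only [energy]
    ring_nf
  have hprod : Summable fun i ↦ Real.exp (-energy a i * t) :=
    (summable_prod_of_nonneg fun _ ↦ (Real.exp_pos _).le).mpr
      ⟨fun j ↦ (hfiber j).summable, (summable_one_div_exp_rpow_mul_sub_one ha ht).congr
        fun j ↦ ((hfiber j).tsum_eq).symm⟩
  rw [boseSum, (hprod.hasSum.prod_fiberwise hfiber).tsum_eq]
  exact hprod.hasSum

theorem continuousAt_boseSum (ha : 0 < a) {t : ℝ} (ht : 0 < t) :
    ContinuousAt (boseSum a) t := by
  refine ContinuousOn.continuousAt ?_ (Ici_mem_nhds (half_lt_self ht))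
  refine continuousOn_tsum (fun j ↦ ?_) (summable_one_div_exp_rpow_mul_sub_one ha (half_pos ht))
    fun j u hu ↦ ?_
  · refine continuousOn_const.div (by fun_prop) fun u hu ↦ ?_
    have : 0 < u := (half_pos ht).trans_le hu
    exact (exp_sub_one_pos (by positivity)).ne'
  · have : 0 < u := (half_pos ht).trans_le hu
    rw [Real.norm_of_nonneg (one_div_pos.mpr (exp_sub_one_pos (by positivity))).le]
    exact one_div_le_one_div_of_le (exp_sub_one_pos (by positivity)) (by gcongr; exact hu)

theorem summable_one_div_energy_rpow {σ : ℝ} (hσ : 1 < σ) (haσ : 1 < a * σ) :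
    Summable fun i ↦ 1 / energy a i ^ σ := by
  refine ((summable_one_div_nat_add_one_rpow haσ).mul_of_nonneg
    (summable_one_div_nat_add_one_rpow hσ) (fun _ ↦ by positivity) (fun _ ↦ by positivity)).congr
    fun ⟨j, n⟩ ↦ ?_
  have hj : (0 : ℝ) < (j : ℝ) + 1 := Nat.cast_add_one_pos j
  rw [energy, Real.mul_rpow (by positivity) (by positivity), ← Real.rpow_mul hj.le,
    one_div_mul_one_div, mul_comm]

theorem hasSum_one_div_energy_cpow {w : ℂ} (hw : 1 < w.re) (haw : 1 < a * w.re) :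
    HasSum (fun i ↦ 1 / (energy a i : ℂ) ^ w) (riemannZeta (a * w) * riemannZeta w) := by
  have haw' : 1 < ((a : ℂ) * w).re := by rwa [Complex.re_ofReal_mul]
  have hζa := hasSum_one_div_nat_add_one_cpow haw'
  have hζ := hasSum_one_div_nat_add_one_cpow hw
  have hsum := summable_mul_of_summable_norm (summable_norm_one_div_nat_add_one_cpow haw')
    (summable_norm_one_div_nat_add_one_cpow hw)
  refine (hζa.mul hζ hsum).congr_fun fun i ↦ ?_
  obtain ⟨j, n⟩ := i
  have hj : (0 : ℝ) ≤ (j : ℝ) + 1 := (Nat.cast_add_one_pos j).le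
  have hn : (0 : ℝ) ≤ (n : ℝ) + 1 := (Nat.cast_add_one_pos n).le
  dsimp only [energy]
  rw [Complex.ofReal_mul, Complex.mul_cpow_ofReal_nonneg hn (by positivity),
    ← Complex.cpow_mul_ofReal_nonneg hj, one_div_mul_one_div, mul_comm]
  push_cast
  rfl

theorem mellin_boseSum (ha : 0 < a) {w : ℂ} (hw : 1 < w.re) (haw : 1 < a * w.re) :
    mellin (fun t ↦ (boseSum a t : ℂ)) w =
      riemannZeta (a * w) * Complex.Gamma w * riemannZeta w := by
  have hmellin := hasSum_mellin_of_hasSum_exp (energy_pos a) (by linarith)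
    (fun t ht ↦ hasSum_exp_neg_energy ha ht) (summable_one_div_energy_rpow hw haw)
  have hzeta := (hasSum_one_div_energy_cpow hw haw).mul_left (Complex.Gamma w)
  simp only [mul_one_div] at hzeta
  rw [hmellin.unique hzeta]
  ring

theorem mellinConvergent_boseSum (ha : 0 < a) {c : ℝ} (hc : 1 < c) (hac : 1 < a * c) :
    MellinConvergent (fun t ↦ (boseSum a t : ℂ)) c :=
  mellinConvergent_of_hasSum_exp (energy_pos a) (by linarith)
    (fun t ht ↦ hasSum_exp_neg_energy ha ht) (summable_one_div_energy_rpow hc hac)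

end BoseSum

theorem stmt18 (s c : ℝ) (hs : s < 0) (hc1 : 1 < c) (hc2 : c > -1 / s) :
    (1 / (2 * (Real.pi : ℂ))) *
        ∫ v : ℝ,
          riemannZeta (-(s : ℂ) * (c + v * Complex.I)) * Complex.Gamma (c + v * Complex.I) *
            riemannZeta (c + v * Complex.I)
      = ∑' j : ℕ, 1 / (((Real.exp (((j : ℝ) + 1) ^ (-s)) : ℝ) : ℂ) - 1) := by
  have ha : 0 < -s := neg_pos.mpr hs
  have hac : 1 < -s * c := by
    rw [gt_iff_lt, div_lt_iff_of_neg hs] at hc2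
    linarith
  have hmellin : ∀ v : ℝ, mellin (fun t ↦ (boseSum (-s) t : ℂ)) (c + v * Complex.I) =
      riemannZeta (-(s : ℂ) * (c + v * Complex.I)) * Complex.Gamma (c + v * Complex.I) *
        riemannZeta (c + v * Complex.I) := fun v ↦ by
    simpa using mellin_boseSum ha (w := c + v * Complex.I) (by simpa) (by simpa using hac)
  have hinv := mellinInv_mellin_eq c _ one_pos (mellinConvergent_boseSum ha hc1 hac)
    (by simpa [Complex.VerticalIntegrable, hmellin] using
      integrable_riemannZeta_mul_Gamma_mul_riemannZeta hc1 hac)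
    (Complex.continuous_ofReal.continuousAt.comp (continuousAt_boseSum ha one_pos))
  simp only [mellinInv, Complex.ofReal_one, Complex.one_cpow, one_smul, hmellin,
    Complex.real_smul] at hinv
  push_cast at hinv
  rw [hinv, boseSum, Complex.ofReal_tsum]
  push_cast
  simp only [mul_one]
end
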